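/- arXiv:1412.3313 — 4 statements merged into one kernel-verified Lean document; each statement's English description precedes it below -/
import Mathlib

section
/- Let K be an abstract class, κ an infinite cardinal, and K̂ any (<κ)-ary functorial expansion of K with vocabulary τ̂. Let N₁, N₂ ∈ K, A ⊆ |N₁| ∩ |N₂|, and let b̄_ℓ be a sequence from N_ℓ for ℓ = 1,2. If gtp(b̄₁/A;N₁) = gtp(b̄₂/A;N₂), then tp_{qf-L_{κ,κ}(τ̂)}(b̄₁/A;N̂₁) = tp_{qf-L_{κ,κ}(τ̂)}(b̄₂/A;N̂₂). -/
/-!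
Self-contained formalization background for "Infinitary stability theory" (Vasey):
infinitary (relational) vocabularies, structures, abstract classes, Galois types,
Galois Morleyization, quantifier-free `L_{κ,κ}` formulas and types, etc.
-/

universe u

namespace GM

open Cardinal

/-- An infinitary (relational) vocabulary: a type of relation symbols together with
an arity (an index type for the arguments) for each symbol. -/
structure Lang : Type (u + 1) where
  Rel : Type u
  arity : Rel → Type u

/-- A `L`-structure whose universe is a subset of the ambient type `Ω`.
Relations only hold on tuples from the carrier. -/
structure Struc (L : Lang.{u}) (Ω : Type u) : Type u where
  carrier : Set Ω
  rel : ∀ r : L.Rel, (L.arity r → Ω) → Prop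
  rel_dom : ∀ r v, rel r v → ∀ i, v i ∈ carrier

variable {L : Lang.{u}} {Ω : Type u}

/-- `M` is a substructure of `N` (written `M ⊆ N` in the paper). -/
def Substruc (M N : Struc L Ω) : Prop :=
  M.carrier ⊆ N.carrier ∧
    ∀ (r : L.Rel) (v : L.arity r → Ω), (∀ i, v i ∈ M.carrier) → (M.rel r v ↔ N.rel r v)

/-- `f` is an isomorphism from `M` onto `N`. -/
def IsIsoOn (M N : Struc L Ω) (f : Ω → Ω) : Prop :=
  Set.InjOn f M.carrier ∧ f '' M.carrier = N.carrier ∧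
    ∀ (r : L.Rel) (v : L.arity r → Ω), (∀ i, v i ∈ M.carrier) →
      (M.rel r v ↔ N.rel r (f ∘ v))

/-- The data of a class of structures together with a binary relation on them. -/
structure PreClass (L : Lang.{u}) (Ω : Type u) : Type u where
  K : Set (Struc L Ω)
  le : Struc L Ω → Struc L Ω → Prop

/-- An abstract class: a class of `τ`-structures with a partial order `≤` refining `⊆`,
both closed under isomorphism. -/
structure AbstractClass (L : Lang.{u}) (Ω : Type u) extends PreClass L Ω : Type u where
  le_refl : ∀ M ∈ K, le M M
  le_antisymm : ∀ {M N}, le M N → le N M → M = N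
  le_trans : ∀ {M N P}, le M N → le N P → le M P
  le_mem_left : ∀ {M N}, le M N → M ∈ K
  le_mem_right : ∀ {M N}, le M N → N ∈ K
  le_sub : ∀ {M N}, le M N → Substruc M N
  iso_closed : ∀ {M N N' : Struc L Ω} {f : Ω → Ω}, le M N → IsIsoOn N N' f →
    N' ∈ K ∧ ∃ M', IsIsoOn M M' f ∧ le M' N'

/-- `f` is a `K`-embedding of `M` into `N`. -/
def IsEmb (C : PreClass L Ω) (M N : Struc L Ω) (f : Ω → Ω) : Prop :=
  M ∈ C.K ∧ N ∈ C.K ∧ ∃ M', IsIsoOn M M' f ∧ C.le M' N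

/-- A triple `(b̄, A, N)` as in the definition of Galois types: `N ∈ K`,
`A ⊆ |N|` and `b̄` a `β`-indexed sequence of elements of `N`. -/
structure GTriple (C : PreClass L Ω) (β : Type u) (A : Set Ω) : Type u where
  N : Struc L Ω
  hN : N ∈ C.K
  hA : A ⊆ N.carrier
  seq : β → Ω
  hseq : ∀ i, seq i ∈ N.carrier

/-- The relation `E_at`: the two triples can be amalgamated over `A`. -/
def Eat (C : PreClass L Ω) {β : Type u} {A : Set Ω} (t₁ t₂ : GTriple C β A) : Prop :=
  ∃ (N : Struc L Ω) (f₁ f₂ : Ω → Ω),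
    IsEmb C t₁.N N f₁ ∧ IsEmb C t₂.N N f₂ ∧
    (∀ a ∈ A, f₁ a = a) ∧ (∀ a ∈ A, f₂ a = a) ∧
    ∀ i, f₁ (t₁.seq i) = f₂ (t₂.seq i)

/-- `E`, the transitive (here: equivalence) closure of `E_at`. -/
instance gsetoid (C : PreClass L Ω) (β : Type u) (A : Set Ω) : Setoid (GTriple C β A) :=
  ⟨Relation.EqvGen (Eat C), Relation.EqvGen.is_equivalence _⟩

/-- Galois types: `E`-equivalence classes of triples. -/
def GType (C : PreClass L Ω) (β : Type u) (A : Set Ω) : Type u :=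
  Quotient (gsetoid C β A)

/-- The Galois type of a triple. -/
def gtp (C : PreClass L Ω) {β : Type u} {A : Set Ω} (t : GTriple C β A) : GType C β A :=
  Quotient.mk _ t

/-- `gtp(b̄ / A; N)`. -/
def gtpOf (C : PreClass L Ω) {β : Type u} (N : Struc L Ω) (b : β → Ω) (A : Set Ω)
    (hN : N ∈ C.K) (hA : A ⊆ N.carrier) (hb : ∀ i, b i ∈ N.carrier) : GType C β A :=
  gtp C ⟨N, hN, hA, b, hb⟩

/-- Restriction of a triple to a smaller domain. -/
def GTriple.restrDom {C : PreClass L Ω} {β : Type u} {A : Set Ω} (t : GTriple C β A)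
    (A₀ : Set Ω) (h : A₀ ⊆ A) : GTriple C β A₀ :=
  ⟨t.N, t.hN, h.trans t.hA, t.seq, t.hseq⟩

/-- Restriction of a triple to a subsequence. -/
def GTriple.restrLen {C : PreClass L Ω} {β : Type u} {A : Set Ω} (t : GTriple C β A)
    (I : Set β) : GTriple C I A :=
  ⟨t.N, t.hN, t.hA, fun i => t.seq i, fun i => t.hseq i⟩

/-- `p ↾ A₀`: restriction of a Galois type to a smaller domain. -/
def GType.restrDom {C : PreClass L Ω} {β : Type u} {A : Set Ω} (p : GType C β A)
    (A₀ : Set Ω) (h : A₀ ⊆ A) : GType C β A₀ :=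
  Quotient.map (fun t => t.restrDom A₀ h)
    (fun t₁ t₂ he => by
      induction he with
      | rel x y hxy =>
        refine Relation.EqvGen.rel _ _ ?_
        obtain ⟨N, f₁, f₂, h₁, h₂, e₁, e₂, e⟩ := hxy
        exact ⟨N, f₁, f₂, h₁, h₂, fun a ha => e₁ a (h ha), fun a ha => e₂ a (h ha), e⟩
      | refl x => exact Relation.EqvGen.refl _
      | symm x y _ ih => exact Relation.EqvGen.symm _ _ ih
      | trans x y z _ _ ih₁ ih₂ => exact Relation.EqvGen.trans _ _ _ ih₁ ih₂) p

/-- `p^I`: restriction of a Galois type to a subsequence. -/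
def GType.restrLen {C : PreClass L Ω} {β : Type u} {A : Set Ω} (p : GType C β A)
    (I : Set β) : GType C I A :=
  Quotient.map (fun t => t.restrLen I)
    (fun t₁ t₂ he => by
      induction he with
      | rel x y hxy =>
        refine Relation.EqvGen.rel _ _ ?_
        obtain ⟨N, f₁, f₂, h₁, h₂, e₁, e₂, e⟩ := hxy
        exact ⟨N, f₁, f₂, h₁, h₂, e₁, e₂, fun i => e i⟩
      | refl x => exact Relation.EqvGen.refl _
      | symm x y _ ih => exact Relation.EqvGen.symm _ _ ih
      | trans x y z _ _ ih₁ ih₂ => exact Relation.EqvGen.trans _ _ _ ih₁ ih₂) p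

/-- `gS^β(A; N)`: the Galois types over `A` of `β`-indexed sequences from `N`. -/
def gtypesRealized (C : PreClass L Ω) (β : Type u) (A : Set Ω) (N : Struc L Ω) :
    Set (GType C β A) :=
  { p | ∃ (hN : N ∈ C.K) (hA : A ⊆ N.carrier) (b : β → Ω) (hb : ∀ i, b i ∈ N.carrier),
      gtpOf C N b A hN hA hb = p }

/-- `gS^β(M)`: Galois types over the model `M`, realized in some `≤`-extension of `M`. -/
def gS (C : PreClass L Ω) (β : Type u) (M : Struc L Ω) : Set (GType C β M.carrier) :=
  { p | ∃ N, C.le M N ∧ p ∈ gtypesRealized C β M.carrier N }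

/-- The canonical index type of size `c`. -/
def outType (c : Cardinal.{u}) : Type u := Quotient.out c

/-- The vocabulary of the `(<κ)`-Galois Morleyization: add one relation symbol `R_p`
of arity `ℓ(p)` for each Galois type `p` over `∅` of length `< κ` (lengths being
represented by the initial segments of `κ.ord.toType`). -/
noncomputable def MorLang (C : PreClass L Ω) (κ : Cardinal.{u}) : Lang.{u} where
  Rel := L.Rel ⊕ Σ o : κ.ord.ToType, GType C (Set.Iio o) (∅ : Set Ω)
  arity := Sum.elim L.arity fun x => ↥(Set.Iio x.1)

/-- The `(<κ)`-Galois Morleyization `N̂` of `N ∈ K`: interpret `R_p(ā)` as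
`gtp(ā / ∅; N) = p`. -/
noncomputable def Mor (C : PreClass L Ω) (κ : Cardinal.{u}) (N : Struc L Ω) :
    Struc (MorLang C κ) Ω where
  carrier := N.carrier
  rel := fun r => match r with
    | Sum.inl r₀ => fun v => N.rel r₀ v
    | Sum.inr x => fun v => ∃ (hN : N ∈ C.K) (hv : ∀ i, v i ∈ N.carrier),
        gtpOf C N v ∅ hN (Set.empty_subset _) hv = x.2
  rel_dom := by
    rintro (r₀ | x) v hv i
    · exact N.rel_dom r₀ v hv i
    · obtain ⟨_, h, _⟩ := hv
      exact h i

/-- The Galois Morleyization of the class `K`, as a class of structures in the expanded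
vocabulary, with the induced ordering. -/
noncomputable def MorPre (C : PreClass L Ω) (κ : Cardinal.{u}) : PreClass (MorLang C κ) Ω :=
  ⟨Mor C κ '' C.K, fun M' N' => ∃ M N, C.le M N ∧ M' = Mor C κ M ∧ N' = Mor C κ N⟩

/-- Quantifier-free `L_{κ,κ}` formulas over a vocabulary `L'`, with free variables
indexed by `α`: atomic formulas, negation, and conjunctions of `< κ` many formulas. -/
inductive QF (L' : Lang.{u}) (κ : Cardinal.{u}) (α : Type u) : Type u
  | equal (x y : α) : QF L' κ α
  | rel (r : L'.Rel) (v : L'.arity r → α) : QF L' κ α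
  | not (φ : QF L' κ α) : QF L' κ α
  | conj (o : κ.ord.ToType) (φs : Set.Iio o → QF L' κ α) : QF L' κ α

/-- Satisfaction of a quantifier-free formula in a structure under a valuation. -/
def QF.Sat {L' : Lang.{u}} {κ : Cardinal.{u}} {α : Type u} (M : Struc L' Ω) (v : α → Ω) :
    QF L' κ α → Prop
  | .equal x y => v x = v y
  | .rel r w => M.rel r (v ∘ w)
  | .not φ => ¬ QF.Sat M v φ
  | .conj _ φs => ∀ i, QF.Sat M v (φs i)

/-- Renaming of free variables. -/
def QF.map {L' : Lang.{u}} {κ : Cardinal.{u}} {α α' : Type u} (g : α → α') :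
    QF L' κ α → QF L' κ α'
  | .equal x y => .equal (g x) (g y)
  | .rel r v => .rel r (g ∘ v)
  | .not φ => .not (φ.map g)
  | .conj o φs => .conj o fun i => (φs i).map g

/-- `tp_{qf-L_{κ,κ}}(b̄ / A; M)`: the quantifier-free type of `b̄` over `A` in `M`.
A formula over `A` in the variables `b̄` is a `QF`-formula whose variables are
`β ⊕ ↥A`, the `↥A`-variables being interpreted by the parameters themselves. -/
def qftp {L' : Lang.{u}} (κ : Cardinal.{u}) (M : Struc L' Ω) {β : Type u} (b : β → Ω)
    (A : Set Ω) : Set (QF L' κ (β ⊕ ↥A)) :=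
  { φ | QF.Sat M (Sum.elim b Subtype.val) φ }

/-- `p ↦ p^s`: the quantifier-free syntactic type (in the Galois Morleyization)
corresponding to a Galois type, computed from a representative. -/
noncomputable def GType.syn {C : PreClass L Ω} (κ : Cardinal.{u}) {β : Type u} {A : Set Ω}
    (p : GType C β A) : Set (QF (MorLang C κ) κ (β ⊕ ↥A)) :=
  qftp κ (Mor C κ (Quotient.out p).N) (Quotient.out p).seq A

/-- `S^β_{qf-L_{κ,κ}}(M)`: quantifier-free syntactic types over `M` realized in
Galois Morleyizations of `≤`-extensions of `M`. -/
noncomputable def synS (C : PreClass L Ω) (κ : Cardinal.{u}) (β : Type u) (M : Struc L Ω) :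
    Set (Set (QF (MorLang C κ) κ (β ⊕ ↥M.carrier))) :=
  { t | ∃ N, C.le M N ∧ ∃ b : β → Ω, (∀ i, b i ∈ N.carrier) ∧
      t = qftp κ (Mor C κ N) b M.carrier }

/-- `K` is `(<κ)`-tame for the family `Γ` of Galois types. -/
def TameFor (C : PreClass L Ω) (κ : Cardinal.{u})
    (Γ : ∀ β : Type u, ∀ A : Set Ω, Set (GType C β A)) : Prop :=
  ∀ (β : Type u) (A : Set Ω), ∀ p ∈ Γ β A, ∀ q ∈ Γ β A, p ≠ q →
    ∃ (A₀ : Set Ω) (h : A₀ ⊆ A), #↥A₀ < κ ∧ p.restrDom A₀ h ≠ q.restrDom A₀ h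

/-- `K` is `(<κ)`-type short for the family `Γ` of Galois types. -/
def ShortFor (C : PreClass L Ω) (κ : Cardinal.{u})
    (Γ : ∀ β : Type u, ∀ A : Set Ω, Set (GType C β A)) : Prop :=
  ∀ (β : Type u) (A : Set Ω), ∀ p ∈ Γ β A, ∀ q ∈ Γ β A, p ≠ q →
    ∃ I : Set β, #↥I < κ ∧ p.restrLen I ≠ q.restrLen I

/-- `K` is fully `(<κ)`-tame and type short: distinct Galois types over models differ
on a restriction to a subsequence and subdomain both of size `< κ`. -/
def FullyTameShort (C : PreClass L Ω) (κ : Cardinal.{u}) : Prop :=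
  ∀ M ∈ C.K, ∀ β : Type u, ∀ p ∈ gS C β M, ∀ q ∈ gS C β M, p ≠ q →
    ∃ (I : Set β) (A₀ : Set Ω) (h : A₀ ⊆ M.carrier), #↥I < κ ∧ #↥A₀ < κ ∧
      (p.restrLen I).restrDom A₀ h ≠ (q.restrLen I).restrDom A₀ h

/-- `K` is `(<κ)`-tame (for Galois types of length one over models). -/
def TameOne (C : PreClass L Ω) (κ : Cardinal.{u}) : Prop :=
  ∀ M ∈ C.K, ∀ p ∈ gS C PUnit M, ∀ q ∈ gS C PUnit M, p ≠ q →
    ∃ (A₀ : Set Ω) (h : A₀ ⊆ M.carrier), #↥A₀ < κ ∧ p.restrDom A₀ h ≠ q.restrDom A₀ h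



open Cardinal
variable {L : Lang.{u}} {Ω : Type u}

/-- An extension of vocabularies: `L' ⊇ L`. -/
structure LangExt (L L' : Lang.{u}) : Type u where
  emb : L.Rel → L'.Rel
  inj : Function.Injective emb
  arity_eq : ∀ r, L'.arity (emb r) = L.arity r

/-- The reduct of an `L'`-structure to `L`. -/
def LangExt.reduct {L L' : Lang.{u}} (E : LangExt L L') (M : Struc L' Ω) : Struc L Ω where
  carrier := M.carrier
  rel := fun r v => M.rel (E.emb r) fun i => v (cast (E.arity_eq r) i)
  rel_dom := by
    intro r v h i
    have := M.rel_dom (E.emb r) _ h (cast (E.arity_eq r).symm i)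
    simpa using this

/-- A functorial expansion of the class `C` to the vocabulary `L'`. -/
structure FuncExp (C : PreClass L Ω) (L' : Lang.{u}) extends LangExt L L' : Type u where
  hat : Struc L Ω → Struc L' Ω
  carrier_hat : ∀ M, (hat M).carrier = M.carrier
  reduct_hat : ∀ M ∈ C.K, toLangExt.reduct (hat M) = M
  iso_hat : ∀ {M N : Struc L Ω} {f : Ω → Ω}, M ∈ C.K → N ∈ C.K → IsIsoOn M N f →
    IsIsoOn (hat M) (hat N) f
  sub_hat : ∀ {M N}, C.le M N → Substruc (hat M) (hat N)

/-- The expanded class `K̂ = hat '' K`, with the induced ordering. -/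
def FuncExp.pre {C : PreClass L Ω} {L' : Lang.{u}} (E : FuncExp C L') : PreClass L' Ω :=
  ⟨E.hat '' C.K, fun M' N' => ∃ M N, C.le M N ∧ M' = E.hat M ∧ N' = E.hat N⟩

/-- Transport of a Galois triple along a functorial expansion. -/
def FuncExp.hatT {C : PreClass L Ω} {L' : Lang.{u}} (E : FuncExp C L') {β : Type u}
    {A : Set Ω} (t : GTriple C β A) : GTriple E.pre β A :=
  ⟨E.hat t.N, ⟨t.N, t.hN, rfl⟩,
    by rw [E.carrier_hat]; exact t.hA, t.seq,
    by intro i; rw [E.carrier_hat]; exact t.hseq i⟩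

/-- The syntactic type `p^s` computed in an arbitrary functorial expansion. -/
noncomputable def GType.synE {C : PreClass L Ω} {L' : Lang.{u}} (E : FuncExp C L')
    (κ : Cardinal.{u}) {β : Type u} {A : Set Ω} (p : GType C β A) :
    Set (QF L' κ (β ⊕ ↥A)) :=
  qftp κ (E.hat (Quotient.out p).N) (Quotient.out p).seq A

/-- The union of an indexed system of structures. -/
def unionStruc {ι : Type u} (M : ι → Struc L Ω) : Struc L Ω where
  carrier := ⋃ i, (M i).carrier
  rel := fun r v => ∃ i, (∀ k, v k ∈ (M i).carrier) ∧ (M i).rel r v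
  rel_dom := by
    intro r v h k
    obtain ⟨i, hi, _⟩ := h
    exact Set.mem_iUnion.2 ⟨i, hi k⟩

/-- `lam` is a Löwenheim–Skolem–Tarski number for `C`. -/
def IsLSTNum (C : PreClass L Ω) (lam : Cardinal.{u}) : Prop :=
  #L.Rel + Cardinal.aleph0 ≤ lam ∧
    ∀ M ∈ C.K, ∀ A : Set Ω, A ⊆ M.carrier →
      ∃ M₀, C.le M₀ M ∧ A ⊆ M₀.carrier ∧ #↥M₀.carrier ≤ #↥A + lam

/-- An abstract elementary class. -/
structure AEC (L : Lang.{u}) (Ω : Type u) extends AbstractClass L Ω : Type u where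
  finitary : ∀ r : L.Rel, Finite (L.arity r)
  coherence : ∀ {M₀ M₁ M₂}, le M₀ M₂ → le M₁ M₂ → Substruc M₀ M₁ → le M₀ M₁
  tv_mem : ∀ {ι : Type u} [Preorder ι] [Nonempty ι] [IsDirected ι (· ≤ ·)]
    (M : ι → Struc L Ω), (∀ i j, i ≤ j → le (M i) (M j)) → unionStruc M ∈ K
  tv_ub : ∀ {ι : Type u} [Preorder ι] [Nonempty ι] [IsDirected ι (· ≤ ·)]
    (M : ι → Struc L Ω), (∀ i j, i ≤ j → le (M i) (M j)) → ∀ j, le (M j) (unionStruc M)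
  tv_lub : ∀ {ι : Type u} [Preorder ι] [Nonempty ι] [IsDirected ι (· ≤ ·)]
    (M : ι → Struc L Ω), (∀ i j, i ≤ j → le (M i) (M j)) →
    ∀ N, (∀ i, le (M i) N) → le (unionStruc M) N
  lst : ∃ lam, IsLSTNum toPreClass lam

/-- The Löwenheim–Skolem number of an AEC: the least LST number. -/
noncomputable def AEC.LS (A : AEC L Ω) : Cardinal.{u} :=
  sInf { lam | IsLSTNum A.toPreClass lam }

/-- `K` has amalgamation. -/
def Amalgamation (C : PreClass L Ω) : Prop :=
  ∀ M₀ M₁ M₂, C.le M₀ M₁ → C.le M₀ M₂ →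
    ∃ (N : Struc L Ω) (f₁ f₂ : Ω → Ω), IsEmb C M₁ N f₁ ∧ IsEmb C M₂ N f₂ ∧
      (∀ a ∈ M₀.carrier, f₁ a = a) ∧ (∀ a ∈ M₀.carrier, f₂ a = a)

theorem elim_mem {s : Set Ω} {β γ : Type u} {b : β → Ω} {c : γ → Ω}
    (hb : ∀ i, b i ∈ s) (hc : ∀ i, c i ∈ s) : ∀ k : β ⊕ γ, Sum.elim b c k ∈ s := by
  rintro (k | k)
  · exact hb k
  · exact hc k

/-- `N` has the Galois `α`-order property of length `μ`. -/
def GaloisOP (C : PreClass L Ω) (N : Struc L Ω) (hN : N ∈ C.K) (α μ : Cardinal.{u}) : Prop :=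
  ∃ (a : μ.ord.ToType → outType α → Ω) (ha : ∀ i k, a i k ∈ N.carrier),
    ∀ i₀ j₀ i₁ j₁, i₀ < j₀ → i₁ < j₁ →
      gtpOf C N (Sum.elim (a i₀) (a j₀)) ∅ hN (Set.empty_subset _)
          (elim_mem (ha i₀) (ha j₀)) ≠
        gtpOf C N (Sum.elim (a j₁) (a i₁)) ∅ hN (Set.empty_subset _)
          (elim_mem (ha j₁) (ha i₁))

/-- `K` has the Galois `α`-order property of length `μ`. -/
def GaloisOPIn (C : PreClass L Ω) (α μ : Cardinal.{u}) : Prop :=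
  ∃ (N : Struc L Ω) (hN : N ∈ C.K), GaloisOP C N hN α μ

/-- `K` has the Galois `α`-order property (of every length). -/
def GaloisOPAll (C : PreClass L Ω) (α : Cardinal.{u}) : Prop :=
  ∀ μ : Cardinal.{u}, GaloisOPIn C α μ

/-- `M'` has the syntactic `α`-order property of length `μ`, witnessed by a
quantifier-free `L_{κ,κ}` formula. -/
def SynOP {L' : Lang.{u}} (κ : Cardinal.{u}) (M' : Struc L' Ω) (α μ : Cardinal.{u}) : Prop :=
  ∃ (a : μ.ord.ToType → outType α → Ω) (φ : QF L' κ (outType α ⊕ outType α)),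
    (∀ i k, a i k ∈ M'.carrier) ∧
    ∀ i j, (QF.Sat M' (Sum.elim (a i) (a j)) φ ↔ i < j)

/-- `K` has the weak `κ`-order property. -/
def WeakOP (C : PreClass L Ω) (κ : Cardinal.{u}) : Prop :=
  ∃ (M N : Struc L Ω), C.le M N ∧ #↥M.carrier < κ ∧
    ∃ (γ δ : Type u), #γ < κ ∧ #δ < κ ∧
      ∃ (p q : GType C (γ ⊕ δ) M.carrier), p ≠ q ∧
        ∃ (hN : N ∈ C.K) (hA : M.carrier ⊆ N.carrier)
          (a : κ.ord.ToType → γ → Ω) (b : κ.ord.ToType → δ → Ω)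
          (ha : ∀ i k, a i k ∈ N.carrier) (hb : ∀ i k, b i k ∈ N.carrier),
          ∀ i j,
            (i ≤ j → gtpOf C N (Sum.elim (a i) (b j)) M.carrier hN hA
              (elim_mem (ha i) (hb j)) = p) ∧
            (j < i → gtpOf C N (Sum.elim (a i) (b j)) M.carrier hN hA
              (elim_mem (ha i) (hb j)) = q)

/-- `K` is Galois stable in `μ` (for types of length one). -/
def GaloisStableIn (C : PreClass L Ω) (μ : Cardinal.{u}) : Prop :=
  ∀ N ∈ C.K, ∀ A : Set Ω, A ⊆ N.carrier → #↥A ≤ μ →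
    #↥(gtypesRealized C PUnit A N) ≤ μ

/-- `K` is Galois stable in `μ` for types of length `β`. -/
def GaloisStableLenIn (C : PreClass L Ω) (β : Type u) (μ : Cardinal.{u}) : Prop :=
  ∀ N ∈ C.K, ∀ A : Set Ω, A ⊆ N.carrier → #↥A ≤ μ →
    #↥(gtypesRealized C β A N) ≤ μ

/-- `K` is `α`-stable in `μ` (for types of length `≤ α`). -/
def GaloisStableLe (C : PreClass L Ω) (α μ : Cardinal.{u}) : Prop :=
  ∀ β : Type u, #β ≤ α → GaloisStableLenIn C β μ

/-- The quantifier-free syntactic types over `A` of `β`-indexed sequences from `M'`. -/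
def synTypesRealized {L' : Lang.{u}} (κ : Cardinal.{u}) (M' : Struc L' Ω) (β : Type u)
    (A : Set Ω) : Set (Set (QF L' κ (β ⊕ ↥A))) :=
  { t | ∃ b : β → Ω, (∀ i, b i ∈ M'.carrier) ∧ t = qftp κ M' b A }

/-- The class `K'` is syntactically stable in `μ` for types of length `β`. -/
def SynStableLenIn {L' : Lang.{u}} (κ : Cardinal.{u}) (K' : Set (Struc L' Ω)) (β : Type u)
    (μ : Cardinal.{u}) : Prop :=
  ∀ M' ∈ K', ∀ A : Set Ω, A ⊆ M'.carrier → #↥A ≤ μ → #↥(synTypesRealized κ M' β A) ≤ μ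

/-- Syntactic `α`-stability (types of length `≤ α`) in `μ`. -/
def SynStableLe {L' : Lang.{u}} (κ : Cardinal.{u}) (K' : Set (Struc L' Ω))
    (α μ : Cardinal.{u}) : Prop :=
  ∀ β : Type u, #β ≤ α → SynStableLenIn κ K' β μ

/-- Syntactic `(<α)`-stability in `μ`. -/
def SynStableLt {L' : Lang.{u}} (κ : Cardinal.{u}) (K' : Set (Struc L' Ω))
    (α μ : Cardinal.{u}) : Prop :=
  ∀ β : Type u, #β < α → SynStableLenIn κ K' β μ

/-- The Hanf function `h(λ) = ℶ_{(2^λ)⁺}`. -/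
noncomputable def hanf (lam : Cardinal.{u}) : Cardinal.{u} :=
  Cardinal.beth (Order.succ ((2 : Cardinal.{u}) ^ lam)).ord

/-- `λ⁻`: `λ` if `λ` is a limit cardinal, the predecessor of `λ` if it is a successor. -/
noncomputable def cardPred (lam : Cardinal.{u}) : Cardinal.{u} :=
  sInf { c | lam ≤ Order.succ c }

/-- `h*(λ) = h(λ⁻)`. -/
noncomputable def hanfStar (lam : Cardinal.{u}) : Cardinal.{u} := hanf (cardPred lam)

/-- `κ_r`: the least regular cardinal `≥ κ`. -/
noncomputable def plusReg (κ : Cardinal.{u}) : Cardinal.{u} :=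
  sInf { c | κ ≤ c ∧ c.IsRegular }

/-- `M` is a `κ`-(Galois-)saturated member of `K`. -/
def Saturated (C : PreClass L Ω) (κ : Cardinal.{u}) (M : Struc L Ω) : Prop :=
  M ∈ C.K ∧ ∀ N, C.le M N → ∀ A : Set Ω, A ⊆ M.carrier → #↥A < κ →
    ∀ (β : Type u), #β < κ → ∀ b : β → Ω, (∀ i, b i ∈ N.carrier) →
      ∃ (hN : N ∈ C.K) (hAN : A ⊆ N.carrier) (hb : ∀ i, b i ∈ N.carrier)
        (b' : β → Ω) (hM : M ∈ C.K) (hAM : A ⊆ M.carrier) (hb' : ∀ i, b' i ∈ M.carrier),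
        gtpOf C M b' A hM hAM hb' = gtpOf C N b A hN hAN hb

/-- The class of `κ`-saturated models of `K`, with the ordering of `K`. -/
def Ksat (C : PreClass L Ω) (κ : Cardinal.{u}) : PreClass L Ω :=
  ⟨{ M | Saturated C κ M }, fun M N => Saturated C κ M ∧ Saturated C κ N ∧ C.le M N⟩

/-- The set of formulas `p` is a `(<κ)`-coheir over `A` in `M'`: every formula in `p`
is satisfied in `M'` by a tuple from `A`. -/
def IsCoheir {L' : Lang.{u}} (κ : Cardinal.{u}) (M' : Struc L' Ω) {γ : Type u} {B : Set Ω}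
    (p : Set (QF L' κ (γ ⊕ ↥B))) (A : Set Ω) : Prop :=
  ∀ φ ∈ p, ∃ a : γ → Ω, (∀ i, a i ∈ A) ∧ QF.Sat M' (Sum.elim a Subtype.val) φ

/-- The set of formulas `p` (a type over `B ⊇ A`) is a `(<κ)`-heir over `A`: every
formula `φ(x̄; b̄)` of `p` over `A` (with extra parameters `b̄` from `B`) already lies in
`p ↾ A` for some choice of parameters `ā` from `A`. -/
def IsHeir {L' : Lang.{u}} (κ : Cardinal.{u}) {γ : Type u} {B : Set Ω}
    (p : Set (QF L' κ (γ ⊕ ↥B))) (A : Set Ω) (hAB : A ⊆ B) : Prop :=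
  ∀ (δ : Type u) (ψ : QF L' κ ((γ ⊕ ↥A) ⊕ δ)) (b : δ → ↥B),
    QF.map (Sum.elim (Sum.map id (Set.inclusion hAB)) fun i => Sum.inr (b i)) ψ ∈ p →
    ∃ a : δ → ↥A,
      QF.map (Sum.elim (Sum.map id (Set.inclusion hAB))
        fun i => Sum.inr (Set.inclusion hAB (a i))) ψ ∈ p

/-- The `(<κ)`-coheir independence relation: `A ⫝_M B` in `N` iff the quantifier-free
type of (an enumeration of) `A` over `|M| ∪ B` in `N̂` is a `(<κ)`-coheir over `|M|`. -/
noncomputable def coheirIndep (C : PreClass L Ω) (κ : Cardinal.{u}) (M N : Struc L Ω)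
    (A B : Set Ω) : Prop :=
  IsCoheir κ (Mor C κ N) (qftp κ (Mor C κ N) (Subtype.val : ↥A → Ω) (M.carrier ∪ B))
    M.carrier


/-! A `K`-embedding `f : M → N` is, after applying the functorial expansion, an isomorphism of
`M̂` onto a substructure of `N̂`. Quantifier-free formulas are preserved by isomorphisms and
agree between a substructure and its extension, so `f` preserves the quantifier-free type of
every tuple; as the two embeddings of an `E_at`-step fix `A` and identify `b̄₁` with `b̄₂`, the
types over `A` agree, and this persists through the transitive closure `E`. -/

theorem QF.sat_comp_iff_of_isIsoOn {L' : Lang.{u}} {κ : Cardinal.{u}} {α : Type u}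
    {M M' : Struc L' Ω} {f : Ω → Ω} (hf : IsIsoOn M M' f)
    {v : α → Ω} (hv : ∀ x, v x ∈ M.carrier) (φ : QF L' κ α) :
    QF.Sat M v φ ↔ QF.Sat M' (f ∘ v) φ := by
  induction φ with
  | equal x y => exact hf.1.eq_iff (hv x) (hv y) |>.symm
  | rel r w => exact hf.2.2 r (v ∘ w) fun i => hv _
  | not φ ih => exact not_congr ih
  | conj o φs ih => exact forall_congr' ih

theorem QF.sat_iff_of_substruc {L' : Lang.{u}} {κ : Cardinal.{u}} {α : Type u}
    {M N : Struc L' Ω} (hs : Substruc M N)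
    {v : α → Ω} (hv : ∀ x, v x ∈ M.carrier) (φ : QF L' κ α) :
    QF.Sat M v φ ↔ QF.Sat N v φ := by
  induction φ with
  | equal x y => exact Iff.rfl
  | rel r w => exact hs.2 r (v ∘ w) fun i => hv _
  | not φ ih => exact not_congr ih
  | conj o φs ih => exact forall_congr' ih

theorem FuncExp.sat_hat_comp_iff_of_isEmb {L' : Lang.{u}} {C : AbstractClass L Ω}
    (E : FuncExp C.toPreClass L') {κ : Cardinal.{u}} {α : Type u} {M N : Struc L Ω}
    {f : Ω → Ω} (hf : IsEmb C.toPreClass M N f) {v : α → Ω} (hv : ∀ x, v x ∈ M.carrier)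
    (φ : QF L' κ α) :
    QF.Sat (E.hat M) v φ ↔ QF.Sat (E.hat N) (f ∘ v) φ := by
  obtain ⟨hM, -, M', hiso, hle⟩ := hf
  have hfv : ∀ x, (f ∘ v) x ∈ (E.hat M').carrier := fun x => by
    rw [E.carrier_hat, ← hiso.2.1]
    exact Set.mem_image_of_mem f (hv x)
  calc QF.Sat (E.hat M) v φ
      ↔ QF.Sat (E.hat M') (f ∘ v) φ :=
        QF.sat_comp_iff_of_isIsoOn (E.iso_hat hM (C.le_mem_left hle) hiso)
          (by rwa [E.carrier_hat]) φ
    _ ↔ QF.Sat (E.hat N) (f ∘ v) φ := QF.sat_iff_of_substruc (E.sub_hat hle) hfv φ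

theorem FuncExp.qftp_hat_eq_of_eat {L' : Lang.{u}} {C : AbstractClass L Ω}
    (E : FuncExp C.toPreClass L') (κ : Cardinal.{u}) {β : Type u} {A : Set Ω}
    {t₁ t₂ : GTriple C.toPreClass β A} (h : Eat C.toPreClass t₁ t₂) :
    qftp κ (E.hat t₁.N) t₁.seq A = qftp κ (E.hat t₂.N) t₂.seq A := by
  obtain ⟨N, f₁, f₂, hf₁, hf₂, hfix₁, hfix₂, hseq⟩ := h
  have hval : f₁ ∘ Sum.elim t₁.seq Subtype.val =
      f₂ ∘ Sum.elim t₂.seq (Subtype.val : A → Ω) := by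
    rw [Sum.comp_elim, Sum.comp_elim]
    congr 1
    · exact funext hseq
    · exact funext fun a => (hfix₁ a a.2).trans (hfix₂ a a.2).symm
  ext φ
  calc QF.Sat (E.hat t₁.N) (Sum.elim t₁.seq Subtype.val) φ
      ↔ QF.Sat (E.hat N) (f₁ ∘ Sum.elim t₁.seq Subtype.val) φ :=
        E.sat_hat_comp_iff_of_isEmb hf₁ (elim_mem t₁.hseq fun a => t₁.hA a.2) φ
    _ ↔ QF.Sat (E.hat N) (f₂ ∘ Sum.elim t₂.seq Subtype.val) φ := by rw [hval]
    _ ↔ QF.Sat (E.hat t₂.N) (Sum.elim t₂.seq Subtype.val) φ :=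
        (E.sat_hat_comp_iff_of_isEmb hf₂ (elim_mem t₂.hseq fun a => t₂.hA a.2) φ).symm

theorem gtp_eq_implies_qftp_eq_general {L L' : Lang.{u}} {Ω : Type u}
    (C : AbstractClass L Ω) (κ : Cardinal.{u})
    (E : FuncExp C.toPreClass L')
    {β : Type u} {A : Set Ω} (t₁ t₂ : GTriple C.toPreClass β A)
    (h : gtp C.toPreClass t₁ = gtp C.toPreClass t₂) :
    qftp κ (E.hat t₁.N) t₁.seq A = qftp κ (E.hat t₂.N) t₂.seq A := by
  have hE : Relation.EqvGen (Eat C.toPreClass) t₁ t₂ := Quotient.exact h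
  exact congrArg (Quot.lift (fun t => qftp κ (E.hat t.N) t.seq A)
    fun _ _ => E.qftp_hat_eq_of_eat κ) (Quot.eqvGen_sound hE)

/-- Lemma 3.9. Let `K` be an abstract class, `κ` an infinite cardinal,
and `K̂` any `(<κ)`-ary functorial expansion of `K` with vocabulary `τ̂`. If two triples
`(b̄₁, A, N₁)` and `(b̄₂, A, N₂)` have the same Galois type, then the quantifier-free
`L_{κ,κ}(τ̂)`-types of `b̄₁` over `A` in `N̂₁` and of `b̄₂` over `A` in `N̂₂` coincide. -/
theorem gtp_eq_implies_qftp_eq {L L' : Lang.{u}} {Ω : Type u}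
    (C : AbstractClass L Ω) (κ : Cardinal.{u}) (hκ : Cardinal.aleph0 ≤ κ)
    (E : FuncExp C.toPreClass L') (hE : ∀ r : L'.Rel, #(L'.arity r) < κ)
    {β : Type u} {A : Set Ω} (t₁ t₂ : GTriple C.toPreClass β A)
    (h : gtp C.toPreClass t₁ = gtp C.toPreClass t₂) :
    qftp κ (E.hat t₁.N) t₁.seq A = qftp κ (E.hat t₂.N) t₂.seq A :=
  gtp_eq_implies_qftp_eq_general C κ E t₁ t₂ h

end GM
end

section
/- Let K be an abstract class, κ an infinite cardinal, and K̂ any (<κ)-ary functorial expansion of K with vocabulary τ̂. Let N ∈ K, A ⊆ |N|, and α an ordinal. Then the map p ↦ p^s is a well-defined surjection from gS^α(A;N), the set of Galois types over A of length-α sequences from N, onto S^α_{qf-L_{κ,κ}(τ̂)}(A;N̂), the set of quantifier-free L_{κ,κ}(τ̂)-types over A of length-α sequences from N̂. -/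
/-!
Self-contained formalization background for "Infinitary stability theory" (Vasey):
infinitary (relational) vocabularies, structures, abstract classes, Galois types,
Galois Morleyization, quantifier-free `L_{κ,κ}` formulas and types, etc.
-/

universe u

namespace GM

open Cardinal

variable {L : Lang.{u}} {Ω : Type u}

open Cardinal
variable {L : Lang.{u}} {Ω : Type u}

/-!
A `K`-embedding fixing `A` pointwise becomes, in the functorial expansion, an isomorphism
onto a substructure fixing `A`, so it preserves quantifier-free formulas over `A`. Hence
`E_at`-related triples, and therefore `E`-related ones, have the same quantifier-free type,
which makes `p ↦ p^s` well defined; surjectivity holds because every type realized in `N̂`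
is `p^s` for the Galois type `p` of the same tuple.
-/

theorem QF.sat_iff_sat_comp_of_isIsoOn_of_substruc {L' : Lang.{u}} {κ : Cardinal.{u}}
    {M M' N' : Struc L' Ω} {f : Ω → Ω} (hiso : IsIsoOn M M' f) (hsub : Substruc M' N')
    {α : Type u} {v : α → Ω} (hv : ∀ x, v x ∈ M.carrier) (φ : QF L' κ α) :
    QF.Sat M v φ ↔ QF.Sat N' (f ∘ v) φ := by
  induction φ with
  | equal x y => exact ⟨congrArg f, fun h => hiso.1 (hv x) (hv y) h⟩
  | rel r w =>
    have hfw : ∀ i, (f ∘ v ∘ w) i ∈ M'.carrier := fun i => hiso.2.1 ▸ ⟨v (w i), hv (w i), rfl⟩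
    exact (hiso.2.2 r (v ∘ w) fun i => hv (w i)).trans (hsub.2 r _ hfw)
  | not φ ih => exact not_congr ih
  | conj o φs ih => exact forall_congr' ih

theorem qftp_eq_qftp_comp_of_isEmb {C : AbstractClass L Ω} {L' : Lang.{u}}
    (E : FuncExp C.toPreClass L') (κ : Cardinal.{u}) {M N : Struc L Ω} {f : Ω → Ω}
    (hf : IsEmb C.toPreClass M N f) {A : Set Ω} (hA : A ⊆ M.carrier) (hfA : ∀ a ∈ A, f a = a)
    {β : Type u} {b : β → Ω} (hb : ∀ i, b i ∈ M.carrier) :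
    qftp κ (E.hat M) b A = qftp κ (E.hat N) (f ∘ b) A := by
  obtain ⟨hM, -, M', hiso, hle⟩ := hf
  have hiso_hat : IsIsoOn (E.hat M) (E.hat M') f := E.iso_hat hM (C.le_mem_left hle) hiso
  have hv : ∀ x, Sum.elim b Subtype.val x ∈ (E.hat M).carrier :=
    E.carrier_hat M ▸ elim_mem hb fun a : A => hA a.2
  have hfv : f ∘ Sum.elim b (Subtype.val : A → Ω) = Sum.elim (f ∘ b) Subtype.val := by
    ext (i | a)
    · rfl
    · exact hfA a a.2
  ext φ
  simpa only [qftp, Set.mem_ofPred_eq, hfv] using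
    QF.sat_iff_sat_comp_of_isIsoOn_of_substruc hiso_hat (E.sub_hat hle) hv φ

theorem qftp_eq_of_eat {C : AbstractClass L Ω} {L' : Lang.{u}} (E : FuncExp C.toPreClass L')
    (κ : Cardinal.{u}) {β : Type u} {A : Set Ω} {t₁ t₂ : GTriple C.toPreClass β A}
    (h : Eat C.toPreClass t₁ t₂) :
    qftp κ (E.hat t₁.N) t₁.seq A = qftp κ (E.hat t₂.N) t₂.seq A := by
  obtain ⟨N, f₁, f₂, hf₁, hf₂, hf₁A, hf₂A, hseq⟩ := h
  rw [qftp_eq_qftp_comp_of_isEmb E κ hf₁ t₁.hA hf₁A t₁.hseq,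
    qftp_eq_qftp_comp_of_isEmb E κ hf₂ t₂.hA hf₂A t₂.hseq,
    show f₁ ∘ t₁.seq = f₂ ∘ t₂.seq from funext hseq]

theorem GType.synE_gtp {C : AbstractClass L Ω} {L' : Lang.{u}} (E : FuncExp C.toPreClass L')
    (κ : Cardinal.{u}) {β : Type u} {A : Set Ω} (t : GTriple C.toPreClass β A) :
    GType.synE E κ (gtp C.toPreClass t) = qftp κ (E.hat t.N) t.seq A :=
  congrArg (Quot.lift (fun t : GTriple C.toPreClass β A => qftp κ (E.hat t.N) t.seq A)
    fun _ _ => qftp_eq_of_eat E κ) (Quot.eqvGen_sound (Quotient.mk_out t))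

theorem gtp_to_qftp_welldefined_surjection_general {L L' : Lang.{u}} {Ω : Type u}
    (C : AbstractClass L Ω) (κ : Cardinal.{u})
    (E : FuncExp C.toPreClass L')
    (N : Struc L Ω) (hN : N ∈ C.toPreClass.K) (A : Set Ω) (hA : A ⊆ N.carrier)
    (β : Type u) :
    (∀ t : GTriple C.toPreClass β A,
        GType.synE E κ (gtp C.toPreClass t) = qftp κ (E.hat t.N) t.seq A) ∧
    Set.MapsTo (GType.synE E κ) (gtypesRealized C.toPreClass β A N)
      (synTypesRealized κ (E.hat N) β A) ∧
    Set.SurjOn (GType.synE E κ) (gtypesRealized C.toPreClass β A N)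
      (synTypesRealized κ (E.hat N) β A) := by
  refine ⟨GType.synE_gtp E κ, ?_, ?_⟩
  · rintro _ ⟨-, -, b, hb, rfl⟩
    exact ⟨b, E.carrier_hat N ▸ hb, GType.synE_gtp E κ _⟩
  · rintro _ ⟨b, hb, rfl⟩
    rw [E.carrier_hat] at hb
    exact ⟨_, ⟨hN, hA, b, hb, rfl⟩, GType.synE_gtp E κ _⟩

/-- Proposition 3.12. Let `K` be an abstract class, `κ` an infinite
cardinal, and `K̂` any `(<κ)`-ary functorial expansion of `K`. Let `N ∈ K`, `A ⊆ |N|`,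
and `β` a length. Then `p ↦ p^s` is a well-defined map (independent of the choice of
representatives) from `gS^β(A; N)` onto `S^β_{qf-L_{κ,κ}(τ̂)}(A; N̂)`: it maps into that
set and is a surjection onto it. -/
theorem gtp_to_qftp_welldefined_surjection {L L' : Lang.{u}} {Ω : Type u}
    (C : AbstractClass L Ω) (κ : Cardinal.{u}) (hκ : Cardinal.aleph0 ≤ κ)
    (E : FuncExp C.toPreClass L') (hE : ∀ r : L'.Rel, #(L'.arity r) < κ)
    (N : Struc L Ω) (hN : N ∈ C.toPreClass.K) (A : Set Ω) (hA : A ⊆ N.carrier)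
    (β : Type u) :
    (∀ t : GTriple C.toPreClass β A,
        GType.synE E κ (gtp C.toPreClass t) = qftp κ (E.hat t.N) t.seq A) ∧
    Set.MapsTo (GType.synE E κ) (gtypesRealized C.toPreClass β A N)
      (synTypesRealized κ (E.hat N) β A) ∧
    Set.SurjOn (GType.synE E κ) (gtypesRealized C.toPreClass β A N)
      (synTypesRealized κ (E.hat N) β A) :=
  gtp_to_qftp_welldefined_surjection_general C κ E N hN A hA β

end GM
end

section
/- Let μ be a regular cardinal, K a μ-abstract elementary class, and K̂ a (<μ)-ary functorial expansion of K with vocabulary τ̂, ordered by M̂ ≤ N̂ iff M ≤ N. Then (K̂, ≤) is a μ-abstract elementary class with LS(K̂) = LS(K) + |τ̂|^{<μ}; in particular, for any μ-directed system ⟨M̂_i : i ∈ I⟩ in K̂, the union ∪_{i∈I} M̂_i equals the expansion of ∪_{i∈I} M_i (so in particular lies in K̂). -/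
/-!
Self-contained formalization background for "Infinitary stability theory" (Vasey):
infinitary (relational) vocabularies, structures, abstract classes, Galois types,
Galois Morleyization, quantifier-free `L_{κ,κ}` formulas and types, etc.
-/

universe u

namespace GM

open Cardinal

variable {L : Lang.{u}} {Ω : Type u}

open Cardinal
variable {L : Lang.{u}} {Ω : Type u}

/-- A partially ordered index type is `μ`-directed: every subset of size `< μ` has an
upper bound. -/
def MuDirected (μ : Cardinal.{u}) (ι : Type u) [Preorder ι] : Prop :=
  ∀ s : Set ι, #↥s < μ → ∃ ub, ∀ i ∈ s, i ≤ ub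

/-- `lam` is a Löwenheim–Skolem–Tarski number for the `μ`-AEC `C`. -/
def IsLSTNumMu {L : Lang.{u}} {Ω : Type u} (μ : Cardinal.{u}) (C : PreClass L Ω)
    (lam : Cardinal.{u}) : Prop :=
  lam ^< μ = lam ∧ #L.Rel + μ ≤ lam ∧
    ∀ M ∈ C.K, ∀ A : Set Ω, A ⊆ M.carrier →
      ∃ M₀, C.le M₀ M ∧ A ⊆ M₀.carrier ∧ #↥M₀.carrier ≤ #↥A ^< μ + lam

/-- A `μ`-abstract elementary class. -/
structure MuAEC (μ : Cardinal.{u}) (L : Lang.{u}) (Ω : Type u)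
    extends AbstractClass L Ω : Type u where
  arity_lt : ∀ r : L.Rel, #(L.arity r) < μ
  coherence : ∀ {M₀ M₁ M₂}, le M₀ M₂ → le M₁ M₂ → Substruc M₀ M₁ → le M₀ M₁
  tv_mem : ∀ {ι : Type u} [Preorder ι] [Nonempty ι] (M : ι → Struc L Ω),
    MuDirected μ ι → (∀ i j, i ≤ j → le (M i) (M j)) → unionStruc M ∈ K
  tv_ub : ∀ {ι : Type u} [Preorder ι] [Nonempty ι] (M : ι → Struc L Ω),
    MuDirected μ ι → (∀ i j, i ≤ j → le (M i) (M j)) → ∀ j, le (M j) (unionStruc M)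
  tv_lub : ∀ {ι : Type u} [Preorder ι] [Nonempty ι] (M : ι → Struc L Ω),
    MuDirected μ ι → (∀ i j, i ≤ j → le (M i) (M j)) →
    ∀ N, (∀ i, le (M i) N) → le (unionStruc M) N
  lst : ∃ lam, IsLSTNumMu μ toPreClass lam

/-- The Löwenheim–Skolem–Tarski number of a `μ`-AEC. -/
noncomputable def MuAEC.LSmu {μ : Cardinal.{u}} {L : Lang.{u}} {Ω : Type u}
    (A : MuAEC μ L Ω) : Cardinal.{u} :=
  sInf { lam | IsLSTNumMu μ A.toPreClass lam }

end GM

/-!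
`M ↦ M̂` is a bijection from `K` onto `K̂`, inverse to the reduct, that preserves carriers
and isomorphisms, and `M ≤ N` gives `M̂ ⊆ N̂`; so each axiom of a `μ`-AEC transfers along
it once hats are known to commute with `μ`-directed unions. They do because a relation
symbol of `τ̂` has fewer than `μ` arguments, and fewer than `μ` elements of a `μ`-directed
union already lie in a single member of the system.

A cardinal `λ` is a Löwenheim–Skolem–Tarski number of `K̂` iff it is one of `K` and
`|τ̂| ≤ λ`; as `λ^{<μ} = λ`, the least such `λ` is `LS(K) + |τ̂|^{<μ}`. This needs
`(x^{<μ})^{<μ} = x^{<μ}` for regular `μ`: realise `x^{<μ}` as the sequences of length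
`< μ` from a set of size `x`; by regularity a family of `κ < μ` of them has lengths bounded
by some `i < μ`, so there are at most `((x + 1)^{|i|})^κ ≤ x^{<μ}` such families for each `i`.
-/

namespace Cardinal

open Ordinal Set

theorem self_le_powerlt {μ : Cardinal.{u}} (a : Cardinal.{u}) (hμ : 1 < μ) : a ≤ a ^< μ := by
  simpa using le_powerlt a hμ

theorem le_powerlt_of_one_lt {x : Cardinal.{u}} (hx : 1 < x) (μ : Cardinal.{u}) :
    μ ≤ x ^< μ := by
  by_contra! h
  exact (cantor' _ hx).not_ge (le_powerlt x h)

theorem powerlt_eq_one_of_le_one {x μ : Cardinal.{u}} (hx : x ≤ 1) (hμ : μ ≠ 0) :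
    x ^< μ = 1 :=
  (powerlt_le.2 fun _ _ => (power_le_power_right hx).trans_eq one_power).antisymm
    (by simpa using le_powerlt x hμ.bot_lt)

theorem powerlt_le_powerlt_of_le {a b : Cardinal.{u}} (h : a ≤ b) (μ : Cardinal.{u}) :
    a ^< μ ≤ b ^< μ :=
  powerlt_le.2 fun _ hc => (power_le_power_right h).trans (le_powerlt b hc)

theorem add_one_power_le_powerlt {x μ c : Cardinal.{u}} (hμ : ℵ₀ ≤ μ) (hx : 1 < x)
    (hc : c < μ) : (x + 1) ^ c ≤ x ^< μ := by
  have hsq : x + 1 ≤ x * x :=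
    calc x + 1 ≤ x + x := add_le_add_right hx.le x
      _ = 2 * x := (two_mul x).symm
      _ ≤ x * x := mul_le_mul_left (two_le_iff_one_lt.2 hx) x
  calc (x + 1) ^ c ≤ (x * x) ^ c := power_le_power_right hsq
    _ = x ^ (c + c) := by rw [mul_power, power_add]
    _ ≤ x ^< μ := le_powerlt x (add_lt_of_lt hμ hc hc)

theorem exists_mk_Iio_eq {μ c : Cardinal.{u}} (hc : c < μ) :
    ∃ i : μ.ord.ToType, #(Iio i) = c := by
  have : IsWellOrder μ.ord.ToType (· < ·) := isWellOrder_lt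
  refine ⟨ToType.mk ⟨c.ord, ord_lt_ord.2 hc⟩, ?_⟩
  have h := card_typein (r := (· < ·)) (ToType.mk (o := μ.ord) ⟨c.ord, ord_lt_ord.2 hc⟩)
  have htypein : typein (α := μ.ord.ToType) (· < ·) (ToType.mk ⟨c.ord, ord_lt_ord.2 hc⟩) =
      c.ord :=
    congrArg Subtype.val (ToType.mk.symm_apply_apply _)
  rw [htypein, card_ord] at h
  exact h.symm

theorem exists_forall_lt_of_mk_lt {μ : Cardinal.{u}} (hμ : μ.IsRegular) {s : Set μ.ord.ToType}
    (hs : #s < μ) : ∃ i, ∀ j ∈ s, j < i :=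
  not_isCofinal_iff.1 fun h => (Order.cof_le h).not_gt (by rwa [cof_toType, hμ.cof_ord])

theorem mk_fun_le_sum_of_isRegular {μ : Cardinal.{u}} (hμ : μ.IsRegular) {K T : Type u}
    (hK : #K < μ) (ρ : T → μ.ord.ToType) :
    #(K → T) ≤ sum fun i => #(K → {t // ρ t < i}) := by
  rw [← mk_sigma]
  refine mk_le_of_surjective (f := fun G : Σ i, K → {t // ρ t < i} => fun k => (G.2 k).1)
    fun F => ?_
  obtain ⟨i, hi⟩ := exists_forall_lt_of_mk_lt hμ (s := range (ρ ∘ F)) (mk_range_le.trans_lt hK)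
  exact ⟨⟨i, fun k => ⟨F k, hi _ (mem_range_self k)⟩⟩, rfl⟩

theorem mk_sigma_fst_lt_le {μ : Cardinal.{u}} (X : Type u) (i : μ.ord.ToType) :
    #{t : Σ j : μ.ord.ToType, Iio j → X // t.1 < i} ≤ #(Iio i → Option X) := by
  refine mk_le_of_injective
    (f := fun t j => if h : j.1 < t.1.1 then some (t.1.2 ⟨j, h⟩) else none) ?_
  rintro ⟨⟨a, g⟩, ha⟩ ⟨⟨b, g'⟩, hb⟩ e
  obtain rfl : a = b := by
    by_contra hne
    rcases lt_or_gt_of_ne hne with hab | hab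
    · simpa [hab] using congrFun e ⟨a, ha⟩
    · simpa [hab] using congrFun e ⟨b, hb⟩
  refine Subtype.ext (congrArg (Sigma.mk a) (funext fun j => ?_))
  simpa [show (j : μ.ord.ToType) < a from j.2] using congrFun e ⟨j, j.2.trans ha⟩

theorem powerlt_pow_le_powerlt {x μ κ : Cardinal.{u}} (hμ : μ.IsRegular) (hx : 1 < x)
    (hκ : κ < μ) : (x ^< μ) ^ κ ≤ x ^< μ := by
  induction x using Cardinal.inductionOn with | _ X => ?_
  induction κ using Cardinal.inductionOn with | _ K => ?_
  let T := Σ j : μ.ord.ToType, Iio j → X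
  have hT : #X ^< μ ≤ #T := powerlt_le.2 fun c hc => by
    obtain ⟨i, rfl⟩ := exists_mk_Iio_eq hc
    rw [power_def]
    exact mk_le_of_injective (f := (⟨i, ·⟩ : (Iio i → X) → T)) fun _ _ h => sigma_mk_injective h
  have hslice (i : μ.ord.ToType) : #(K → {t : T // t.1 < i}) ≤ #X ^< μ :=
    calc #(K → {t : T // t.1 < i}) ≤ #(Iio i → Option X) ^ #K := by
          rw [← power_def]; exact power_le_power_right (mk_sigma_fst_lt_le X i)
      _ = (#X + 1) ^ (#(Iio i) * #K) := by rw [← power_def, mk_option, ← power_mul]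
      _ ≤ #X ^< μ := add_one_power_le_powerlt hμ.aleph0_le hx
          (mul_lt_of_lt hμ.aleph0_le (by simpa using mk_Iio_lt i) hκ)
  calc (#X ^< μ) ^ #K ≤ #(K → T) := by rw [← power_def]; exact power_le_power_right hT
    _ ≤ sum fun i => #(K → {t : T // t.1 < i}) := mk_fun_le_sum_of_isRegular hμ hκ Sigma.fst
    _ ≤ sum fun _ : μ.ord.ToType => #X ^< μ := sum_le_sum _ _ hslice
    _ = #X ^< μ := by
      have hμX := le_powerlt_of_one_lt hx μ
      rw [sum_const', mk_ord_toType, mul_eq_right (hμ.aleph0_le.trans hμX) hμX hμ.ne_zero]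

theorem powerlt_powerlt {μ : Cardinal.{u}} (hμ : μ.IsRegular) (x : Cardinal.{u}) :
    (x ^< μ) ^< μ = x ^< μ := by
  rcases le_or_gt x 1 with hx | hx
  · rw [powerlt_eq_one_of_le_one hx hμ.ne_zero, powerlt_eq_one_of_le_one le_rfl hμ.ne_zero]
  · exact (powerlt_le.2 fun κ hκ => powerlt_pow_le_powerlt hμ hx hκ).antisymm
      (self_le_powerlt _ (one_lt_aleph0.trans_le hμ.aleph0_le))

theorem add_powerlt_of_powerlt_eq {a b μ : Cardinal.{u}} (ha : ℵ₀ ≤ a) (ha' : a ^< μ = a)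
    (hb' : b ^< μ = b) : (a + b) ^< μ = a + b := by
  rw [add_eq_max ha]
  rcases max_choice a b with h | h <;> rwa [h]

end Cardinal

namespace GM

open Cardinal

variable {L L' : Lang.{u}} {Ω : Type u}

theorem Struc.ext {M N : Struc L Ω} (hc : M.carrier = N.carrier)
    (hr : ∀ r v, M.rel r v ↔ N.rel r v) : M = N := by
  cases M
  cases N
  subst hc
  congr
  funext r v
  exact propext (hr r v)

theorem IsIsoOn.unique {M N N' : Struc L Ω} {f : Ω → Ω} (h : IsIsoOn M N f)
    (h' : IsIsoOn M N' f) : N = N' := by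
  have hc : N.carrier = N'.carrier := h.2.1.symm.trans h'.2.1
  refine Struc.ext hc fun r v => ?_
  by_cases hv : ∀ i, v i ∈ N.carrier
  · rw [← h.2.1] at hv
    choose w hw hfw using hv
    obtain rfl : f ∘ w = v := funext hfw
    exact (h.2.2 r w hw).symm.trans (h'.2.2 r w hw)
  · exact iff_of_false (fun hr => hv (N.rel_dom r v hr)) fun hr => hv (hc ▸ N'.rel_dom r v hr)

theorem Substruc.reduct (E : LangExt L L') {M N : Struc L' Ω} (h : Substruc M N) :
    Substruc (E.reduct M) (E.reduct N) :=
  ⟨h.1, fun r _ hv => h.2 (E.emb r) _ fun i => hv (cast (E.arity_eq r) i)⟩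

theorem IsIsoOn.reduct (E : LangExt L L') {M N : Struc L' Ω} {f : Ω → Ω}
    (h : IsIsoOn M N f) : IsIsoOn (E.reduct M) (E.reduct N) f :=
  ⟨h.1, h.2.1, fun r _ hv => h.2.2 (E.emb r) _ fun i => hv (cast (E.arity_eq r) i)⟩

theorem IsLSTNumMu.of_le {μ lam lam' : Cardinal.{u}} {C : PreClass L Ω}
    (h : IsLSTNumMu μ C lam) (hle : lam ≤ lam') (hpow : lam' ^< μ = lam') :
    IsLSTNumMu μ C lam' :=
  ⟨hpow, h.2.1.trans hle, fun M hM B hB =>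
    (h.2.2 M hM B hB).imp fun _ hM₀ => ⟨hM₀.1, hM₀.2.1, hM₀.2.2.trans (by gcongr)⟩⟩

theorem MuAEC.isLeast_LSmu {μ : Cardinal.{u}} (A : MuAEC μ L Ω) :
    IsLeast {lam | IsLSTNumMu μ A.toPreClass lam} A.LSmu :=
  isLeast_csInf A.lst

namespace FuncExp

section AbstractClass

variable {C : AbstractClass L Ω} (E : FuncExp C.toPreClass L')

theorem hat_inj {M N : Struc L Ω} (hM : M ∈ C.K) (hN : N ∈ C.K) :
    E.hat M = E.hat N ↔ M = N :=
  ⟨fun h => by rw [← E.reduct_hat M hM, h, E.reduct_hat N hN], congrArg E.hat⟩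

theorem pre_le_iff {M' N' : Struc L' Ω} :
    E.pre.le M' N' ↔ C.le (E.reduct M') (E.reduct N') ∧
      M' = E.hat (E.reduct M') ∧ N' = E.hat (E.reduct N') := by
  constructor
  · rintro ⟨M, N, h, rfl, rfl⟩
    rw [E.reduct_hat M (C.le_mem_left h), E.reduct_hat N (C.le_mem_right h)]
    exact ⟨h, rfl, rfl⟩
  · rintro ⟨h, hM, hN⟩
    exact ⟨_, _, h, hM, hN⟩

theorem exists_eq_hat_of_isIsoOn {N : Struc L Ω} {N' : Struc L' Ω} {f : Ω → Ω}
    (hN : N ∈ C.K) (h : IsIsoOn (E.hat N) N' f) :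
    ∃ N₀ ∈ C.K, IsIsoOn N N₀ f ∧ N' = E.hat N₀ := by
  have hiso : IsIsoOn N (E.reduct N') f := by
    simpa only [E.reduct_hat N hN] using h.reduct E.toLangExt
  have hK := (C.iso_closed (C.le_refl N hN) hiso).1
  exact ⟨_, hK, hiso, h.unique (E.iso_hat hN hK hiso)⟩

theorem exists_eq_hat_of_pre_le {ι : Type u} [Preorder ι] {M' : ι → Struc L' Ω}
    (h : ∀ i j, i ≤ j → E.pre.le (M' i) (M' j)) :
    ∃ M : ι → Struc L Ω, (∀ i j, i ≤ j → C.le (M i) (M j)) ∧ M' = fun i => E.hat (M i) :=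
  ⟨fun i => E.reduct (M' i), fun i j hij => (E.pre_le_iff.1 (h i j hij)).1,
    funext fun i => (E.pre_le_iff.1 (h i i le_rfl)).2.1⟩

def abstractClass : AbstractClass L' Ω where
  toPreClass := E.pre
  le_refl := by
    rintro _ ⟨M, hM, rfl⟩
    exact ⟨M, M, C.le_refl M hM, rfl, rfl⟩
  le_antisymm h₁ h₂ := by
    obtain ⟨h₁, hM, hN⟩ := E.pre_le_iff.1 h₁
    rw [hM, hN, C.le_antisymm h₁ (E.pre_le_iff.1 h₂).1]
  le_trans h₁ h₂ :=
    E.pre_le_iff.2 ⟨C.le_trans (E.pre_le_iff.1 h₁).1 (E.pre_le_iff.1 h₂).1,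
      (E.pre_le_iff.1 h₁).2.1, (E.pre_le_iff.1 h₂).2.2⟩
  le_mem_left h := ⟨_, C.le_mem_left (E.pre_le_iff.1 h).1, (E.pre_le_iff.1 h).2.1.symm⟩
  le_mem_right h := ⟨_, C.le_mem_right (E.pre_le_iff.1 h).1, (E.pre_le_iff.1 h).2.2.symm⟩
  le_sub := by
    rintro _ _ ⟨M, N, h, rfl, rfl⟩
    exact E.sub_hat h
  iso_closed := by
    rintro _ _ N'' f ⟨M, N, hMN, rfl, rfl⟩ hiso
    obtain ⟨N₀, hN₀, hiso₀, rfl⟩ := E.exists_eq_hat_of_isIsoOn (C.le_mem_right hMN) hiso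
    obtain ⟨-, M₀, hM₀, hle₀⟩ := C.iso_closed hMN hiso₀
    exact ⟨⟨N₀, hN₀, rfl⟩, E.hat M₀, E.iso_hat (C.le_mem_left hMN) (C.le_mem_left hle₀) hM₀,
      M₀, N₀, hle₀, rfl, rfl⟩

theorem isLSTNumMu_pre_iff {μ lam : Cardinal.{u}} (hμ : ℵ₀ ≤ μ) :
    IsLSTNumMu μ E.pre lam ↔ IsLSTNumMu μ C.toPreClass lam ∧ #L'.Rel ≤ lam := by
  have hLL' : #L.Rel ≤ #L'.Rel := mk_le_of_injective E.inj
  constructor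
  · rintro ⟨hpow, hcard, hLS⟩
    refine ⟨⟨hpow, (add_le_add_left hLL' μ).trans hcard, fun M hM B hB => ?_⟩,
      le_self_add.trans hcard⟩
    obtain ⟨_, ⟨M₀, N, hle, rfl, hN⟩, hB₀, hsize⟩ :=
      hLS _ ⟨M, hM, rfl⟩ B (by rwa [E.carrier_hat])
    obtain rfl := (E.hat_inj (C.le_mem_right hle) hM).1 hN.symm
    rw [E.carrier_hat] at hB₀ hsize
    exact ⟨M₀, hle, hB₀, hsize⟩
  · rintro ⟨⟨hpow, hcard, hLS⟩, hL'⟩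
    have hμlam : μ ≤ lam := le_add_self.trans hcard
    refine ⟨hpow, add_le_of_le (hμ.trans hμlam) hL' hμlam, ?_⟩
    rintro _ ⟨M, hM, rfl⟩ B hB
    rw [E.carrier_hat] at hB
    obtain ⟨M₀, hle, hB₀, hsize⟩ := hLS M hM B hB
    exact ⟨E.hat M₀, ⟨M₀, M, hle, rfl, rfl⟩, by rwa [E.carrier_hat], by rwa [E.carrier_hat]⟩

theorem isLeast_isLSTNumMu_pre {μ lam₀ : Cardinal.{u}} (hμ : μ.IsRegular)
    (h₀ : IsLeast {lam | IsLSTNumMu μ C.toPreClass lam} lam₀) :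
    IsLeast {lam | IsLSTNumMu μ E.pre lam} (lam₀ + #L'.Rel ^< μ) := by
  simp only [IsLeast, lowerBounds, Set.mem_ofPred_eq, E.isLSTNumMu_pre_iff hμ.aleph0_le]
  have hℵ₀ : ℵ₀ ≤ lam₀ := hμ.aleph0_le.trans (le_add_self.trans h₀.1.2.1)
  refine ⟨⟨h₀.1.of_le le_self_add
      (add_powerlt_of_powerlt_eq hℵ₀ h₀.1.1 (powerlt_powerlt hμ _)),
    (self_le_powerlt _ (one_lt_aleph0.trans_le hμ.aleph0_le)).trans le_add_self⟩, ?_⟩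
  rintro c ⟨hc, hL'c⟩
  exact add_le_of_le (hℵ₀.trans (h₀.2 hc)) (h₀.2 hc) (hc.1 ▸ powerlt_le_powerlt_of_le hL'c μ)

end AbstractClass

section MuAEC

variable {μ : Cardinal.{u}} {A : MuAEC μ L Ω} (E : FuncExp A.toPreClass L')

theorem unionStruc_hat (hE : ∀ r : L'.Rel, #(L'.arity r) < μ) {ι : Type u} [Preorder ι]
    [Nonempty ι] (M : ι → Struc L Ω) (hdir : MuDirected μ ι)
    (hmono : ∀ i j, i ≤ j → A.le (M i) (M j)) :
    unionStruc (fun i => E.hat (M i)) = E.hat (unionStruc M) := by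
  have hsub (j : ι) : Substruc (E.hat (M j)) (E.hat (unionStruc M)) :=
    E.sub_hat (A.tv_ub M hdir hmono j)
  refine Struc.ext (by simp only [unionStruc, E.carrier_hat]) fun r v => ⟨?_, fun hv => ?_⟩
  · rintro ⟨i, hvi, hv⟩
    exact ((hsub i).2 r v hvi).1 hv
  · have hmem (k : L'.arity r) : ∃ i, v k ∈ (M i).carrier := by
      simpa only [E.carrier_hat, unionStruc, Set.mem_iUnion] using
        (E.hat (unionStruc M)).rel_dom r v hv k
    choose idx hidx using hmem
    obtain ⟨j, hj⟩ := hdir (Set.range idx) (mk_range_le.trans_lt (hE r))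
    have hvj (k : L'.arity r) : v k ∈ (E.hat (M j)).carrier := by
      rw [E.carrier_hat]
      exact (A.le_sub (hmono _ _ (hj _ (Set.mem_range_self k)))).1 (hidx k)
    exact ⟨j, hvj, ((hsub j).2 r v hvj).2 hv⟩

def muAEC (hμ : μ.IsRegular) (hE : ∀ r : L'.Rel, #(L'.arity r) < μ) : MuAEC μ L' Ω where
  toAbstractClass := E.abstractClass
  arity_lt := hE
  coherence h₀₂ h₁₂ hsub :=
    E.pre_le_iff.2 ⟨A.coherence (E.pre_le_iff.1 h₀₂).1 (E.pre_le_iff.1 h₁₂).1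
      (hsub.reduct E.toLangExt), (E.pre_le_iff.1 h₀₂).2.1, (E.pre_le_iff.1 h₁₂).2.1⟩
  tv_mem M' hdir hmono := by
    obtain ⟨M, hM, rfl⟩ := E.exists_eq_hat_of_pre_le hmono
    rw [E.unionStruc_hat hE M hdir hM]
    exact ⟨_, A.tv_mem M hdir hM, rfl⟩
  tv_ub M' hdir hmono j := by
    obtain ⟨M, hM, rfl⟩ := E.exists_eq_hat_of_pre_le hmono
    rw [E.unionStruc_hat hE M hdir hM]
    exact ⟨_, _, A.tv_ub M hdir hM j, rfl, rfl⟩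
  tv_lub {ι} _ _ M' hdir hmono N' hN' := by
    obtain ⟨M, hM, rfl⟩ := E.exists_eq_hat_of_pre_le hmono
    have hle (i : ι) : A.le (M i) (E.reduct N') := by
      simpa only [E.reduct_hat (M i) (A.le_mem_left (hM i i le_rfl))] using
        (E.pre_le_iff.1 (hN' i)).1
    rw [E.unionStruc_hat hE M hdir hM]
    exact ⟨_, _, A.tv_lub M hdir hM _ hle, rfl,
      (E.pre_le_iff.1 (hN' (Classical.arbitrary ι))).2.2⟩
  lst := ⟨_, (E.isLeast_isLSTNumMu_pre hμ A.isLeast_LSmu).1⟩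

end MuAEC

end FuncExp

/-- Proposition 3.7(4). Let `μ` be a regular cardinal, `K` a `μ`-AEC,
and `K̂` a `(<μ)`-ary functorial expansion of `K`, ordered by `M̂ ≤ N̂` iff `M ≤ N`.
Then `(K̂, ≤)` is a `μ`-AEC with `LS(K̂) = LS(K) + |τ̂|^{<μ}`; in particular for any
`μ`-directed system `⟨M̂ᵢ : i ∈ I⟩` in `K̂` the union `⋃ᵢ M̂ᵢ` equals the expansion of
`⋃ᵢ Mᵢ` (so in particular lies in `K̂`). -/
theorem funcexp_of_muAEC_is_muAEC {L L' : Lang.{u}} {Ω : Type u}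
    (μ : Cardinal.{u}) (hμ : μ.IsRegular) (A : MuAEC μ L Ω)
    (E : FuncExp A.toPreClass L') (hE : ∀ r : L'.Rel, #(L'.arity r) < μ) :
    (∃ A' : MuAEC μ L' Ω, A'.toPreClass = E.pre ∧
        A'.LSmu = A.LSmu + #L'.Rel ^< μ) ∧
    (∀ (ι : Type u) [Preorder ι] [Nonempty ι] (M : ι → Struc L Ω),
        MuDirected μ ι → (∀ i j, i ≤ j → A.le (M i) (M j)) →
        unionStruc (fun i => E.hat (M i)) = E.hat (unionStruc M)) :=
  ⟨⟨E.muAEC hμ hE, rfl, (E.isLeast_isLSTNumMu_pre hμ A.isLeast_LSmu).csInf_eq⟩,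
    fun _ _ _ M hdir hmono => E.unionStruc_hat hE M hdir hmono⟩

end GM
end

section
/- Let K be an abstract class, κ an infinite cardinal, K̂ the (<κ)-Galois Morleyization of K, α < κ a cardinal, and N ∈ K. (1) If N̂ has the syntactic α-order property of length μ, then N has the Galois α-order property of length μ. (2) Let χ := |gS^{α+α}(∅)| and let λ, μ be cardinals with μ ≥ (2^{λ+χ})⁺; if N has the Galois α-order property of length μ, then N̂ has the syntactic α-order property of length λ. In particular, K has the Galois α-order property (i.e., of every length) if and only if K̂ has the syntactic α-order property (of every length). -/
/-!
Self-contained formalization background for "Infinitary stability theory" (Vasey):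
infinitary (relational) vocabularies, structures, abstract classes, Galois types,
Galois Morleyization, quantifier-free `L_{κ,κ}` formulas and types, etc.
-/

universe u

/-!
Galois types over `∅` are preserved by `K`-embeddings, so quantifier-free formulas of the
Morleyization cannot distinguish tuples with the same Galois type over `∅`: a formula that orders
a sequence separates the types of its increasing pairs from those of its decreasing pairs.

Conversely, let `S` be the set of Galois types of increasing pairs of a Galois-ordered sequence.
If `|S| < κ`, the disjunction `θ(x̄, ȳ)` of the relation symbols `R_p`, `p ∈ S`, is an
`L_{κ,κ}` formula, and `θ(x̄, ȳ) ∧ ¬θ(ȳ, x̄)` defines the order. A subsequence of length `λ` with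
`|S| < κ` exists: trivially if `χ < κ`, and otherwise by the Erdős–Rado theorem
`(2^{λ+χ})⁺ → ((λ+χ)⁺)²_{λ+χ}`, which gives one whose increasing pairs all have the same type.
For Erdős–Rado, follow for each point `a` a branch of new points having the colours of `a` towards
all earlier points of the branch. A point met in its own branch before stage `c⁺` is coded by that
stage and its colours towards the earlier points; as there are only `2^c` codes, some branch has
length `c⁺`, and it is end-homogeneous.
-/

open Cardinal

namespace ErdosRado

variable {W P O : Type u}

def Realizes (F : W → W → P) (a : W) (S : Set W) (w : W) : Prop :=
  w ∉ S ∧ ∀ v ∈ S, F v w = F v a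

variable [Nonempty W] [LinearOrder O] [WellFoundedLT O]

/-- `a` itself is a valid choice at every stage until it has been picked. -/
noncomputable def branch (F : W → W → P) (a : W) : O → W :=
  wellFounded_lt.fix fun ξ prev =>
    Classical.epsilon (Realizes F a (Set.range fun ν : Set.Iio ξ => prev ν ν.2))

theorem branch_eq (F : W → W → P) (a : W) (ξ : O) :
    branch F a ξ = Classical.epsilon (Realizes F a (branch F a '' Set.Iio ξ)) := by
  rw [branch, WellFounded.fix_eq, Set.image_eq_range]

theorem branch_realizes {F : W → W → P} {a : W} {ξ : O} (h : a ∉ branch F a '' Set.Iio ξ) :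
    Realizes F a (branch F a '' Set.Iio ξ) (branch F a ξ) := by
  rw [branch_eq]
  exact Classical.epsilon_spec ⟨a, h, fun _ _ => rfl⟩

theorem branch_injective {F : W → W → P} {a : W} (h : a ∉ Set.range (branch F a : O → W)) :
    Function.Injective (branch F a : O → W) :=
  Function.Injective.of_lt_imp_ne fun ν _ hνξ heq =>
    (branch_realizes fun ha => h (Set.image_subset_range _ _ ha)).1 ⟨ν, hνξ, heq⟩

theorem branch_endHomogeneous {F : W → W → P} {a : W} (h : a ∉ Set.range (branch F a : O → W))
    {ν ξ : O} (hνξ : ν < ξ) : F (branch F a ν) (branch F a ξ) = F (branch F a ν) a :=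
  (branch_realizes fun ha => h (Set.image_subset_range _ _ ha)).2 _ ⟨ν, hνξ, rfl⟩

theorem eq_of_branch_eq_self {F : W → W → P} {a b : W} {δ : O} (ha : branch F a δ = a)
    (hb : branch F b δ = b) (htrace : ∀ ν < δ, F (branch F a ν) a = F (branch F b ν) b) :
    a = b := by
  suffices h : ∀ ξ ≤ δ, branch F a ξ = branch F b ξ by rw [← ha, ← hb, h δ le_rfl]
  intro ξ
  induction ξ using WellFoundedLT.induction with
  | ind ξ ih =>
    intro hξ
    have himage : branch F a '' Set.Iio ξ = branch F b '' Set.Iio ξ :=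
      Set.image_congr fun ν hν => ih ν hν (hν.le.trans hξ)
    have hrealizes : Realizes F a (branch F a '' Set.Iio ξ) =
        Realizes F b (branch F b '' Set.Iio ξ) := by
      rw [← himage]
      ext w
      refine and_congr_right fun _ => ?_
      simp only [Set.forall_mem_image]
      refine forall₂_congr fun ν hν => ?_
      rw [htrace ν (lt_of_lt_of_le hν hξ), ih ν hν (hν.le.trans hξ)]
    rw [branch_eq, branch_eq, hrealizes]

theorem exists_not_mem_range_branch {c : Cardinal.{u}} (hc : ℵ₀ ≤ c) (hP : #P ≤ c)
    (hW : 2 ^ c < #W) (F : W → W → P) :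
    ∃ a, a ∉ Set.range (branch F a : (Order.succ c).ord.ToType → W) := by
  by_contra! h
  choose δ hδ using h
  have hsigma : ∀ {ξ ξ' : (Order.succ c).ord.ToType} {f g : _ → P},
      (⟨ξ, fun ν : Set.Iio ξ => f ν.1⟩ : Σ ξ, Set.Iio ξ → P) = ⟨ξ', fun ν => g ν.1⟩ →
        ξ = ξ' ∧ ∀ ν < ξ, f ν = g ν := by
    intro ξ ξ' f g h
    obtain ⟨rfl, h⟩ := Sigma.mk.inj_iff.mp h
    exact ⟨rfl, fun ν hν => congrFun (eq_of_heq h) ⟨ν, hν⟩⟩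
  have hcode : Function.Injective fun a =>
      (⟨δ a, fun ν => F (branch F a ν.1) a⟩ : Σ ξ, Set.Iio ξ → P) := by
    intro a b hab
    obtain ⟨hδab, htrace⟩ := hsigma (f := fun ν => F (branch F a ν) a)
      (g := fun ν => F (branch F b ν) b) hab
    exact eq_of_branch_eq_self (hδ a) (hδab ▸ hδ b) htrace
  have hcount : #(Σ ξ : (Order.succ c).ord.ToType, Set.Iio ξ → P) ≤ 2 ^ c :=
    calc #(Σ ξ : (Order.succ c).ord.ToType, Set.Iio ξ → P)
        ≤ sum fun _ : (Order.succ c).ord.ToType => (2 : Cardinal) ^ c := by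
          rw [mk_sigma]
          refine sum_le_sum _ _ fun ξ => ?_
          have hξ : #(Set.Iio ξ) ≤ c := Order.lt_succ_iff.mp (by simpa using mk_Iio_lt ξ)
          rw [← power_def, ← power_self_eq hc]
          exact (power_le_power_right hP).trans
            (power_le_power_left (aleph0_pos.trans_le hc).ne' hξ)
      _ = Order.succ c * 2 ^ c := by rw [sum_const', mk_ord_toType]
      _ ≤ 2 ^ c * 2 ^ c := mul_le_mul_left (Order.succ_le_of_lt (cantor c)) _
      _ = 2 ^ c := mul_eq_self (hc.trans (cantor c).le)
  exact (mk_le_of_injective hcode).trans hcount |>.not_gt hW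

end ErdosRado

open ErdosRado in
theorem Cardinal.erdos_rado {W P : Type u} [LinearOrder W] {c : Cardinal.{u}} (hc : ℵ₀ ≤ c)
    (hP : #P ≤ c) (hW : 2 ^ c < #W) (F : W → W → P) :
    ∃ (p : P) (H : Set W), Order.succ c ≤ #H ∧ ∀ u ∈ H, ∀ v ∈ H, u < v → F u v = p := by
  have : Nonempty W := mk_ne_zero_iff.mp (pos_of_gt hW).ne'
  -- Branches ignore the order of `W`, so colour unordered pairs.
  set Fs : W → W → P := fun u v => F (min u v) (max u v)
  have hFs_lt {u v : W} (h : u < v) : Fs u v = F u v := by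
    simp only [Fs, min_eq_left h.le, max_eq_right h.le]
  have hFs_comm (u v : W) : Fs u v = Fs v u := by simp only [Fs, min_comm, max_comm]
  obtain ⟨a, ha⟩ := exists_not_mem_range_branch hc hP hW Fs
  set x := (branch Fs a : (Order.succ c).ord.ToType → W)
  obtain ⟨p, hp⟩ := infinite_pigeonhole_card (fun ν => Fs (x ν) a) (Order.succ c)
    (mk_ord_toType _).ge (hc.trans (Order.le_succ c))
    (by rw [(isRegular_succ hc).cof_ord]; exact hP.trans_lt (Order.lt_succ c))
  refine ⟨p, x '' ((fun ν => Fs (x ν) a) ⁻¹' {p}),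
    by rwa [mk_image_eq (branch_injective ha)], ?_⟩
  rintro _ ⟨ν, hν, rfl⟩ _ ⟨ξ, hξ, rfl⟩ hlt
  rw [← hFs_lt hlt]
  rcases lt_trichotomy ν ξ with h | rfl | h
  · exact (branch_endHomogeneous ha h).trans hν
  · exact absurd hlt (lt_irrefl _)
  · exact (hFs_comm _ _).trans ((branch_endHomogeneous ha h).trans hξ)

theorem exists_strictMono_mem_of_le_mk {W : Type u} [LinearOrder W] [WellFoundedLT W]
    {H : Set W} {lam : Cardinal.{u}} (h : lam ≤ #H) :
    ∃ g : lam.ord.ToType → W, StrictMono g ∧ ∀ i, g i ∈ H := by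
  have hle : @Ordinal.type lam.ord.ToType (· < ·) _ ≤ @Ordinal.type H (· < ·) _ := by
    rw [Ordinal.type_toType, Cardinal.ord_le]
    exact h
  obtain ⟨f⟩ := Ordinal.type_le_iff'.mp hle
  exact ⟨fun i => (f i).1, fun i j hij => f.map_rel_iff.mpr hij, fun i => (f i).2⟩

namespace GM

variable {L : Lang.{u}} {Ω : Type u}

section Formulas

variable {L' : Lang.{u}} {κ : Cardinal.{u}} {β γ : Type u}

theorem QF.sat_map (M : Struc L' Ω) (v : γ → Ω) (g : β → γ) (φ : QF L' κ β) :
    QF.Sat M v (φ.map g) ↔ QF.Sat M (v ∘ g) φ := by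
  induction φ with
  | equal x y => rfl
  | rel r w => rfl
  | not φ ih => exact not_congr ih
  | conj o φs ih => exact forall_congr' ih

theorem exists_Iio_equiv_of_mk_lt {ι : Type u} (hι : #ι < κ) :
    ∃ o : κ.ord.ToType, Nonempty (Set.Iio o ≃ ι) := by
  obtain ⟨o, ho⟩ := Ordinal.typein_surj (α := κ.ord.ToType) (· < ·)
    (o := (#ι).ord) (by rw [Ordinal.type_toType]; exact ord_lt_ord.mpr hι)
  refine ⟨o, Cardinal.eq.mp ?_⟩
  rw [← card_ord (#ι), ← ho]
  rfl

theorem QF.exists_sat_iff_forall {ι : Type u} (hι : #ι < κ) (φ : ι → QF L' κ β) :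
    ∃ ψ : QF L' κ β, ∀ (M : Struc L' Ω) (v : β → Ω), QF.Sat M v ψ ↔ ∀ i, QF.Sat M v (φ i) := by
  obtain ⟨o, ⟨e⟩⟩ := exists_Iio_equiv_of_mk_lt hι
  exact ⟨.conj o (φ ∘ e), fun M v => e.forall_congr fun _ => Iff.rfl⟩

theorem QF.exists_sat_iff_and_not (hκ : ℵ₀ ≤ κ) (φ ψ : QF L' κ β) :
    ∃ χ : QF L' κ β, ∀ (M : Struc L' Ω) (v : β → Ω),
      QF.Sat M v χ ↔ QF.Sat M v φ ∧ ¬ QF.Sat M v ψ := by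
  obtain ⟨χ, hχ⟩ := QF.exists_sat_iff_forall (lt_aleph0_of_finite (ULift.{u} Bool) |>.trans_le hκ)
    fun b => cond b.down φ (.not ψ)
  refine ⟨χ, fun M v => (hχ M v).trans ?_⟩
  simp only [ULift.forall, Bool.forall_bool, cond_false, cond_true]
  exact and_comm

end Formulas

section Embeddings

variable {C : AbstractClass L Ω} {M N : Struc L Ω} {f : Ω → Ω}

theorem IsEmb.map_mem (h : IsEmb C.toPreClass M N f) {x : Ω} (hx : x ∈ M.carrier) :
    f x ∈ N.carrier := by
  obtain ⟨-, -, M', iso, hle⟩ := h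
  exact (C.le_sub hle).1 (iso.2.1 ▸ Set.mem_image_of_mem f hx)

theorem IsEmb.rel_iff (h : IsEmb C.toPreClass M N f) (r : L.Rel) (v : L.arity r → Ω)
    (hv : ∀ i, v i ∈ M.carrier) : M.rel r v ↔ N.rel r (f ∘ v) := by
  obtain ⟨-, -, M', iso, hle⟩ := h
  rw [iso.2.2 r v hv]
  exact (C.le_sub hle).2 r (f ∘ v) fun i => iso.2.1 ▸ Set.mem_image_of_mem f (hv i)

theorem isEmb_id (hN : N ∈ C.K) : IsEmb C.toPreClass N N id :=
  ⟨hN, hN, N, ⟨Set.injOn_id _, Set.image_id _, fun _ _ _ => Iff.rfl⟩, C.le_refl N hN⟩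

theorem gtpOf_eq_of_isEmb (h : IsEmb C.toPreClass M N f) {β : Type u} (b : β → Ω)
    (hb : ∀ i, b i ∈ M.carrier) :
    gtpOf C.toPreClass M b ∅ h.1 (Set.empty_subset _) hb =
      gtpOf C.toPreClass N (f ∘ b) ∅ h.2.1 (Set.empty_subset _) fun i => h.map_mem (hb i) :=
  Quotient.sound <| .rel _ _
    ⟨N, f, id, h, isEmb_id h.2.1, fun _ => False.elim, fun _ => False.elim, fun _ => rfl⟩

theorem QF.sat_mor_iff_of_isEmb (κ : Cardinal.{u}) (h : IsEmb C.toPreClass M N f)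
    {β : Type u} {b : β → Ω} (hb : ∀ i, b i ∈ M.carrier) (φ : QF (MorLang C.toPreClass κ) κ β) :
    QF.Sat (Mor C.toPreClass κ M) b φ ↔ QF.Sat (Mor C.toPreClass κ N) (f ∘ b) φ := by
  induction φ with
  | equal x y =>
    obtain ⟨-, -, M', iso, -⟩ := h
    exact ⟨congrArg f, iso.1 (hb x) (hb y)⟩
  | rel r v =>
    cases r with
    | inl r => exact h.rel_iff r (b ∘ v) fun i => hb (v i)
    | inr p =>
      have hgtp := gtpOf_eq_of_isEmb h (b ∘ v) fun i => hb (v i)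
      exact ⟨fun ⟨_, _, hp⟩ => ⟨h.2.1, fun i => h.map_mem (hb (v i)), hgtp.symm.trans hp⟩,
        fun ⟨_, _, hp⟩ => ⟨h.1, fun i => hb (v i), hgtp.trans hp⟩⟩
  | not φ ih => exact not_congr ih
  | conj o φs ih => exact forall_congr' ih

theorem QF.sat_mor_iff_of_gtp_eq (κ : Cardinal.{u}) {β : Type u}
    {t₁ t₂ : GTriple C.toPreClass β ∅} (h : gtp C.toPreClass t₁ = gtp C.toPreClass t₂)
    (φ : QF (MorLang C.toPreClass κ) κ β) :
    QF.Sat (Mor C.toPreClass κ t₁.N) t₁.seq φ ↔ QF.Sat (Mor C.toPreClass κ t₂.N) t₂.seq φ := by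
  have hE : Relation.EqvGen (Eat C.toPreClass) t₁ t₂ := Quotient.exact h
  clear h
  induction hE with
  | rel x y hxy =>
    obtain ⟨_, f₁, f₂, h₁, h₂, -, -, he⟩ := hxy
    rw [QF.sat_mor_iff_of_isEmb κ h₁ x.hseq, QF.sat_mor_iff_of_isEmb κ h₂ y.hseq,
      show f₁ ∘ x.seq = f₂ ∘ y.seq from funext he]
  | refl => exact Iff.rfl
  | symm _ _ _ ih => exact ih.symm
  | trans _ _ _ _ _ ih₁ ih₂ => exact ih₁.trans ih₂

end Embeddings

theorem galoisOP_of_synOP (C : AbstractClass L Ω) {κ α μ : Cardinal.{u}} {N : Struc L Ω}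
    (hN : N ∈ C.K) (h : SynOP κ (Mor C.toPreClass κ N) α μ) : GaloisOP C.toPreClass N hN α μ := by
  obtain ⟨a, φ, ha, hsat⟩ := h
  refine ⟨a, ha, fun i₀ j₀ i₁ j₁ h₀ h₁ heq => ?_⟩
  have hiff := QF.sat_mor_iff_of_gtp_eq κ heq φ
  exact lt_asymm h₁ ((hsat j₁ i₁).mp (hiff.mp ((hsat i₀ j₀).mpr h₀)))

section GaloisTypes

variable {β γ : Type u} {A : Set Ω}

def GType.reindex {C : PreClass L Ω} (g : γ → β) : GType C β A → GType C γ A :=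
  Quotient.map (fun t => ⟨t.N, t.hN, t.hA, t.seq ∘ g, fun i => t.hseq (g i)⟩)
    (fun t₁ t₂ he => by
      induction he with
      | rel x y hxy =>
        obtain ⟨N, f₁, f₂, h₁, h₂, e₁, e₂, e⟩ := hxy
        exact .rel _ _ ⟨N, f₁, f₂, h₁, h₂, e₁, e₂, fun i => e (g i)⟩
      | refl x => exact .refl _
      | symm x y _ ih => exact .symm _ _ ih
      | trans x y z _ _ ih₁ ih₂ => exact .trans _ _ _ ih₁ ih₂)

theorem GType.reindex_injective {C : PreClass L Ω} (e : γ ≃ β) :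
    Function.Injective (GType.reindex e : GType C β A → GType C γ A) := by
  refine Function.LeftInverse.injective (g := GType.reindex e.symm) ?_
  rintro ⟨t⟩
  exact congrArg (Quotient.mk _) (by cases t; simp [Function.comp_def])

end GaloisTypes

def incTypes (C : PreClass L Ω) {N : Struc L Ω} (hN : N ∈ C.K) {ι β : Type u} [LT ι]
    (a : ι → β → Ω) (ha : ∀ i k, a i k ∈ N.carrier) : Set (GType C (β ⊕ β) (∅ : Set Ω)) :=
  {q | ∃ i j, i < j ∧
    gtpOf C N (Sum.elim (a i) (a j)) ∅ hN (Set.empty_subset _) (elim_mem (ha i) (ha j)) = q}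

section Definability

variable (C : PreClass L Ω) {κ : Cardinal.{u}} {β : Type u}

theorem exists_sat_mor_iff_gtpOf_eq (hβ : #β < κ) (q : GType C β ∅) :
    ∃ φ : QF (MorLang C κ) κ β, ∀ (N : Struc L Ω) (hN : N ∈ C.K) (b : β → Ω)
      (hb : ∀ i, b i ∈ N.carrier),
      QF.Sat (Mor C κ N) b φ ↔ gtpOf C N b ∅ hN (Set.empty_subset _) hb = q := by
  -- The symbols `R_p` are only indexed by types of initial segments of `κ`.
  obtain ⟨o, ⟨e⟩⟩ := exists_Iio_equiv_of_mk_lt hβ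
  refine ⟨.rel (Sum.inr ⟨o, q.reindex e⟩) e, fun N hN b hb => ?_⟩
  refine ⟨fun ⟨_, _, h⟩ => GType.reindex_injective e h, fun h => ⟨hN, fun i => hb (e i), ?_⟩⟩
  exact congrArg (GType.reindex e) h

theorem exists_sat_mor_iff_gtpOf_mem (hβ : #β < κ) (S : Set (GType C β ∅)) (hS : #S < κ) :
    ∃ φ : QF (MorLang C κ) κ β, ∀ (N : Struc L Ω) (hN : N ∈ C.K) (b : β → Ω)
      (hb : ∀ i, b i ∈ N.carrier),
      QF.Sat (Mor C κ N) b φ ↔ gtpOf C N b ∅ hN (Set.empty_subset _) hb ∈ S := by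
  choose φ hφ using fun q : S => exists_sat_mor_iff_gtpOf_eq C hβ q.1
  obtain ⟨ψ, hψ⟩ := QF.exists_sat_iff_forall hS fun q => .not (φ q)
  refine ⟨.not ψ, fun N hN b hb => ?_⟩
  change ¬ QF.Sat (Mor C κ N) b ψ ↔ _
  rw [hψ]
  simp only [QF.Sat, hφ _ N hN b hb, not_forall, not_not, Subtype.exists, exists_prop]
  exact ⟨fun ⟨_, hq, h⟩ => h ▸ hq, fun h => ⟨_, h, rfl⟩⟩

theorem exists_sat_mor_iff_lt (hκ : ℵ₀ ≤ κ) (hβ : #β < κ) {N : Struc L Ω} (hN : N ∈ C.K)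
    {ι : Type u} [LinearOrder ι] (a : ι → β → Ω) (ha : ∀ i k, a i k ∈ N.carrier)
    (hop : ∀ i₀ j₀ i₁ j₁, i₀ < j₀ → i₁ < j₁ →
      gtpOf C N (Sum.elim (a i₀) (a j₀)) ∅ hN (Set.empty_subset _) (elim_mem (ha i₀) (ha j₀)) ≠
        gtpOf C N (Sum.elim (a j₁) (a i₁)) ∅ hN (Set.empty_subset _) (elim_mem (ha j₁) (ha i₁)))
    (hsmall : #(incTypes C hN a ha) < κ) :
    ∃ φ : QF (MorLang C κ) κ (β ⊕ β),
      ∀ i j, QF.Sat (Mor C κ N) (Sum.elim (a i) (a j)) φ ↔ i < j := by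
  have hββ : #(β ⊕ β) < κ := by
    rw [mk_sum, lift_id]
    exact add_lt_of_lt hκ hβ hβ
  obtain ⟨φ, hφ⟩ := exists_sat_mor_iff_gtpOf_mem C hββ _ hsmall
  obtain ⟨θ, hθ⟩ := QF.exists_sat_iff_and_not hκ φ (φ.map Sum.swap)
  refine ⟨θ, fun i j => ?_⟩
  rw [hθ, QF.sat_map, Sum.elim_swap, hφ N hN _ (elim_mem (ha i) (ha j)),
    hφ N hN _ (elim_mem (ha j) (ha i))]
  constructor
  · rintro ⟨⟨i', j', hij', heq⟩, hnot⟩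
    rcases lt_trichotomy i j with h | rfl | h
    · exact h
    · exact absurd ⟨i', j', hij', heq⟩ hnot
    · exact absurd heq (hop i' j' j i hij' h)
  · intro hij
    exact ⟨⟨i, j, hij, rfl⟩, fun ⟨i', j', hij', heq⟩ => hop i' j' i j hij' hij heq⟩

end Definability

theorem exists_strictMono_incTypes_lt (C : PreClass L Ω) {κ : Cardinal.{u}} (hκ : ℵ₀ ≤ κ)
    {N : Struc L Ω} (hN : N ∈ C.K) {W β : Type u} [LinearOrder W] [WellFoundedLT W]
    (a : W → β → Ω) (ha : ∀ i k, a i k ∈ N.carrier) {lam : Cardinal.{u}}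
    (hW : 2 ^ (lam + #(GType C (β ⊕ β) (∅ : Set Ω))) < #W) :
    ∃ g : lam.ord.ToType → W, StrictMono g ∧
      #(incTypes C hN (a ∘ g) fun i => ha (g i)) < κ := by
  by_cases hχ : #(GType C (β ⊕ β) (∅ : Set Ω)) < κ
  · have hlam : lam ≤ #(Set.univ : Set W) := by
      rw [mk_univ]
      exact (self_le_add_right _ _).trans ((cantor _).le.trans hW.le)
    obtain ⟨g, hg, -⟩ := exists_strictMono_mem_of_le_mk hlam
    exact ⟨g, hg, (mk_set_le _).trans_lt hχ⟩
  · have hc : ℵ₀ ≤ lam + #(GType C (β ⊕ β) (∅ : Set Ω)) :=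
      hκ.trans ((not_lt.mp hχ).trans (self_le_add_left _ _))
    obtain ⟨p, H, hH, hhom⟩ := erdos_rado hc (self_le_add_left _ _) hW
      fun i j => gtpOf C N (Sum.elim (a i) (a j)) ∅ hN (Set.empty_subset _)
        (elim_mem (ha i) (ha j))
    obtain ⟨g, hg, hgH⟩ := exists_strictMono_mem_of_le_mk
      ((self_le_add_right _ _).trans ((Order.le_succ _).trans hH))
    refine ⟨g, hg, ?_⟩
    have hsub : incTypes C hN (a ∘ g) (fun i => ha (g i)) ⊆ {p} := by
      rintro _ ⟨i, j, hij, rfl⟩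
      exact hhom _ (hgH i) _ (hgH j) (hg hij)
    exact (mk_le_mk_of_subset hsub).trans_lt ((mk_singleton p).trans_lt
      (one_lt_aleph0.trans_le hκ))

theorem synOP_of_galoisOP (C : AbstractClass L Ω) {κ : Cardinal.{u}} (hκ : ℵ₀ ≤ κ)
    {α : Cardinal.{u}} (hα : α < κ) {N : Struc L Ω} (hN : N ∈ C.K) {lam μ : Cardinal.{u}}
    (hμ : Order.succ (2 ^ (lam + #(GType C.toPreClass (outType α ⊕ outType α) (∅ : Set Ω))))
      ≤ μ)
    (h : GaloisOP C.toPreClass N hN α μ) : SynOP κ (Mor C.toPreClass κ N) α lam := by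
  obtain ⟨a, ha, hop⟩ := h
  obtain ⟨g, hg, hsmall⟩ := exists_strictMono_incTypes_lt C.toPreClass hκ hN a ha
    ((Order.lt_succ _).trans_le (by rwa [mk_ord_toType]))
  obtain ⟨φ, hφ⟩ := exists_sat_mor_iff_lt C.toPreClass hκ (by rwa [outType, mk_out]) hN
    (a ∘ g) (fun i => ha (g i)) (fun i₀ j₀ i₁ j₁ h₀ h₁ => hop _ _ _ _ (hg h₀) (hg h₁)) hsmall
  exact ⟨a ∘ g, φ, fun i => ha (g i), hφ⟩

/-- Proposition 4.4. Let `K` be an abstract class, `κ` an infinite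
cardinal, `K̂` its `(<κ)`-Galois Morleyization, `α < κ` a cardinal, and `N ∈ K`.
(1) If `N̂` has the syntactic `α`-order property of length `μ`, then `N` has the Galois
`α`-order property of length `μ`. (2) With `χ := |gS^{α+α}(∅)|`, if `μ ≥ (2^{λ+χ})⁺`
and `N` has the Galois `α`-order property of length `μ`, then `N̂` has the syntactic
`α`-order property of length `λ`. In particular, `K` has the Galois `α`-order property
(of every length) iff `K̂` has the syntactic `α`-order property (of every length). -/
theorem galois_op_iff_syntactic_op {L : Lang.{u}} {Ω : Type u}
    (C : AbstractClass L Ω) (κ : Cardinal.{u}) (hκ : Cardinal.aleph0 ≤ κ)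
    (α : Cardinal.{u}) (hα : α < κ) (N : Struc L Ω) (hN : N ∈ C.toPreClass.K) :
    (∀ μ : Cardinal.{u},
        SynOP κ (Mor C.toPreClass κ N) α μ → GaloisOP C.toPreClass N hN α μ) ∧
    (∀ lam μ : Cardinal.{u},
        Order.succ ((2 : Cardinal.{u}) ^
            (lam + #(GType C.toPreClass (outType α ⊕ outType α) (∅ : Set Ω)))) ≤ μ →
        GaloisOP C.toPreClass N hN α μ → SynOP κ (Mor C.toPreClass κ N) α lam) ∧
    (GaloisOPAll C.toPreClass α ↔
      ∀ μ : Cardinal.{u}, ∃ N' ∈ C.toPreClass.K,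
        SynOP κ (Mor C.toPreClass κ N') α μ) := by
  refine ⟨fun μ => galoisOP_of_synOP C hN, fun lam μ hμ => synOP_of_galoisOP C hκ hα hN hμ,
    fun hall μ => ?_, fun hsyn μ => ?_⟩
  · obtain ⟨N', hN', hgal⟩ := hall (Order.succ (2 ^
      (μ + #(GType C.toPreClass (outType α ⊕ outType α) (∅ : Set Ω)))))
    exact ⟨N', hN', synOP_of_galoisOP C hκ hα hN' le_rfl hgal⟩
  · obtain ⟨N', hN', h⟩ := hsyn μ
    exact ⟨N', hN', galoisOP_of_synOP C hN' h⟩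

end GM
end
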